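/- arXiv:0908.0705 — 8 statements merged into one kernel-verified Lean document; each statement's English description precedes it below -/
import Mathlib

section
/- Let Γ be a locally finite connected graph with basepoint v, f a Floyd scaling function, and c > 0. For every ε > 0 there exists a finite set D ⊂ Γ such that every c-quasigeodesic path γ in Γ that avoids D has Floyd length L_{f,v}(γ) < ε. (Karlsson's Lemma for quasigeodesics.) -/
open Filter Topology

/-- The vertex set of a locally finite connected graph, presented via its
graph metric `d` (an integer-valued geodesic metric with finite balls). -/
structure GraphDist (V : Type) where
  d : V → V → ℕ
  d_self : ∀ x, d x x = 0
  eq_of_d : ∀ x y, d x y = 0 → x = y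
  d_symm : ∀ x y, d x y = d y x
  d_tri : ∀ x y z, d x z ≤ d x y + d y z
  locallyFinite : ∀ (x : V) (n : ℕ), {y | d x y ≤ n}.Finite
  geodesic : ∀ x y, 0 < d x y → ∃ z, d x z = 1 ∧ d z y + 1 = d x y

namespace GraphDist

variable {V : Type} (G : GraphDist V)

/-- `γ : Fin (n+1) → V` is an edge path (consecutive vertices at distance `≤ 1`). -/
def IsPath {n : ℕ} (γ : Fin (n + 1) → V) : Prop :=
  ∀ i : Fin n, G.d (γ i.castSucc) (γ i.succ) ≤ 1

/-- Floyd length of a path with respect to the scaling function `f` and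
basepoint `v`: the edge `{x,y}` has length `f (d v {x,y})`. -/
def floydLen (f : ℕ → ℝ) (v : V) {n : ℕ} (γ : Fin (n + 1) → V) : ℝ :=
  ∑ i : Fin n, f (min (G.d v (γ i.castSucc)) (G.d v (γ i.succ)))

/-- Floyd distance: infimal Floyd length of edge paths joining two vertices. -/
noncomputable def floydDist (f : ℕ → ℝ) (v : V) (a b : V) : ℝ :=
  sInf {L | ∃ (n : ℕ) (γ : Fin (n + 1) → V), G.IsPath γ ∧ γ 0 = a ∧
    γ (Fin.last n) = b ∧ L = G.floydLen f v γ}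

/-- A finite `c`-quasigeodesic path. -/
def IsQuasigeodesic (c : ℝ) {n : ℕ} (γ : Fin (n + 1) → V) : Prop :=
  G.IsPath γ ∧ ∀ s t : Fin (n + 1),
    (1 / c) * |(s : ℝ) - (t : ℝ)| - c ≤ (G.d (γ s) (γ t) : ℝ) ∧
    (G.d (γ s) (γ t) : ℝ) ≤ c * |(s : ℝ) - (t : ℝ)| + c

/-- A `c`-quasigeodesic ray. -/
def IsQuasigeodesicRay (c : ℝ) (γ : ℕ → V) : Prop :=
  (∀ n : ℕ, G.d (γ n) (γ (n + 1)) ≤ 1) ∧ ∀ s t : ℕ,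
    (1 / c) * |(s : ℝ) - (t : ℝ)| - c ≤ (G.d (γ s) (γ t) : ℝ) ∧
    (G.d (γ s) (γ t) : ℝ) ≤ c * |(s : ℝ) - (t : ℝ)| + c

/-- A finite `α`-distorted (`α`-geodesic) path. -/
def IsAlphaPath (α : ℕ → ℝ) {n : ℕ} (γ : Fin (n + 1) → V) : Prop :=
  G.IsPath γ ∧ ∀ s t : Fin (n + 1),
    (G.d (γ s) (γ t) : ℝ) ≤ α (Nat.dist s t) ∧
    (Nat.dist (s : ℕ) (t : ℕ) : ℝ) ≤ α (G.d (γ s) (γ t))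

/-- An `α`-geodesic ray. -/
def IsAlphaRay (α : ℕ → ℝ) (γ : ℕ → V) : Prop :=
  (∀ n : ℕ, G.d (γ n) (γ (n + 1)) ≤ 1) ∧ ∀ s t : ℕ,
    (G.d (γ s) (γ t) : ℝ) ≤ α (Nat.dist s t) ∧
    (Nat.dist s t : ℝ) ≤ α (G.d (γ s) (γ t))

end GraphDist

/-- `f` is a Floyd scaling function with ratio constant `K`. -/
def IsFloydFunction (f : ℕ → ℝ) (K : ℝ) : Prop :=
  (∀ n, 0 < f n) ∧ (∀ n, 1 ≤ f n / f (n + 1) ∧ f n / f (n + 1) ≤ K) ∧ Summable f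

/-- `α` is a distortion function: non-decreasing with `α n ≥ n`. -/
def IsDistortion (α : ℕ → ℝ) : Prop :=
  (∀ n, 0 < α n) ∧ Monotone α ∧ ∀ n : ℕ, (n : ℝ) ≤ α n

/- Auxiliary lemmas for Karlsson's Lemma. -/

section KarlssonAux

open Filter Topology Finset

private lemma natDist_cast_real (s t : ℕ) : (Nat.dist s t : ℝ) = |(s : ℝ) - (t : ℝ)| := by
  rcases le_total s t with h | h
  · rw [Nat.dist_eq_sub_of_le h, Nat.cast_sub h, abs_sub_comm,
      abs_of_nonneg (sub_nonneg.2 (by exact_mod_cast h : (s : ℝ) ≤ t))]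
  · rw [Nat.dist_comm, Nat.dist_eq_sub_of_le h, Nat.cast_sub h,
      abs_of_nonneg (sub_nonneg.2 (by exact_mod_cast h : (t : ℝ) ≤ s))]

private lemma sum_dist_le (h : ℕ → ℝ) (hh : ∀ k, 0 ≤ h k) (a n : ℕ) (ha : a ≤ n) :
    ∑ i ∈ Finset.range n, h (Nat.dist i a) ≤ 2 * ∑ k ∈ Finset.range (n + 1), h k := by
  classical
  rw [← Finset.sum_filter_add_sum_filter_not (Finset.range n) (· < a), two_mul]
  have aux : ∀ s : Finset ℕ, (∀ x ∈ s, ∀ y ∈ s, Nat.dist x a = Nat.dist y a → x = y) →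
      (∀ x ∈ s, Nat.dist x a ≤ n) →
      ∑ i ∈ s, h (Nat.dist i a) ≤ ∑ k ∈ Finset.range (n + 1), h k := by
    intro s hinj hbd
    rw [← Finset.sum_image (f := h) hinj]
    apply Finset.sum_le_sum_of_subset_of_nonneg
    · intro k hk
      simp only [Finset.mem_image] at hk
      obtain ⟨x, hx, rfl⟩ := hk
      exact Finset.mem_range.2 (Nat.lt_succ_of_le (hbd x hx))
    · intro k _ _
      exact hh k
  apply add_le_add
  · apply aux
    · intro x hx y hy hxy
      simp only [Finset.mem_filter, Finset.mem_range] at hx hy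
      simp only [Nat.dist] at hxy
      omega
    · intro x hx
      simp only [Finset.mem_filter, Finset.mem_range] at hx
      simp only [Nat.dist]
      omega
  · apply aux
    · intro x hx y hy hxy
      simp only [Finset.mem_filter, Finset.mem_range] at hx hy
      simp only [Nat.dist] at hxy
      omega
    · intro x hx
      simp only [Finset.mem_filter, Finset.mem_range] at hx
      simp only [Nat.dist]
      omega

private lemma sum_comp_div_le (f : ℕ → ℝ) (hpos : ∀ k, 0 ≤ f k) (hsum : Summable f)
    (C m0 : ℕ) (ψ : ℕ → ℕ) (s : Finset ℕ)
    (hfib : ∀ j, (s.filter fun k => ψ k = j).card ≤ C)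
    (hge : ∀ k ∈ s, m0 ≤ ψ k) :
    ∑ k ∈ s, f (ψ k) ≤ (C : ℝ) * ∑' j, f (j + m0) := by
  classical
  rw [Finset.sum_comp]
  have ht : ∀ j ∈ s.image ψ, m0 ≤ j := by
    intro j hj
    obtain ⟨k, hk, rfl⟩ := Finset.mem_image.1 hj
    exact hge k hk
  calc ∑ j ∈ s.image ψ, (s.filter fun k => ψ k = j).card • f j
      ≤ ∑ j ∈ s.image ψ, (C : ℝ) * f j := by
        refine Finset.sum_le_sum fun j _ => ?_
        rw [nsmul_eq_mul]
        exact mul_le_mul_of_nonneg_right (by exact_mod_cast hfib j) (hpos j)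
    _ = (C : ℝ) * ∑ j ∈ s.image ψ, f j := by rw [Finset.mul_sum]
    _ ≤ (C : ℝ) * ∑' j, f (j + m0) := by
        refine mul_le_mul_of_nonneg_left ?_ (Nat.cast_nonneg C)
        have hinj : ∀ x ∈ s.image ψ, ∀ y ∈ s.image ψ, x - m0 = y - m0 → x = y := by
          intro x hx y hy hxy
          have := ht x hx
          have := ht y hy
          omega
        have h1 : ∑ r ∈ (s.image ψ).image (· - m0), f (r + m0)
            = ∑ j ∈ s.image ψ, f (j - m0 + m0) := Finset.sum_image hinj
        have h2 : ∑ j ∈ s.image ψ, f (j - m0 + m0) = ∑ j ∈ s.image ψ, f j :=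
          Finset.sum_congr rfl fun j hj => by rw [Nat.sub_add_cancel (ht j hj)]
        rw [← h2, ← h1]
        exact Summable.sum_le_tsum _ (fun r _ => hpos _) ((summable_nat_add_iff m0).2 hsum)

private lemma sum_g_le (f : ℕ → ℝ) (hpos : ∀ k, 0 ≤ f k) (hanti : Antitone f)
    (hsum : Summable f) (C B m N : ℕ) (hC : 1 ≤ C) :
    ∑ k ∈ Finset.range N, f (max m ((k - B) / C))
      ≤ ((B + C * (m + 1) : ℕ) : ℝ) * f m + (C : ℝ) * ∑' j, f (j + (m + 1)) := by
  classical
  rw [← Finset.sum_filter_add_sum_filter_not (Finset.range N) (· < B + C * (m + 1))]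
  apply add_le_add
  · calc ∑ k ∈ (Finset.range N).filter (· < B + C * (m + 1)), f (max m ((k - B) / C))
        ≤ ((Finset.range N).filter (· < B + C * (m + 1))).card • f m :=
          Finset.sum_le_card_nsmul _ _ _ (fun k _ => hanti (le_max_left _ _))
      _ ≤ ((B + C * (m + 1) : ℕ) : ℝ) * f m := by
          rw [nsmul_eq_mul]
          refine mul_le_mul_of_nonneg_right ?_ (hpos m)
          have hsub : (Finset.range N).filter (· < B + C * (m + 1))
              ⊆ Finset.range (B + C * (m + 1)) := by
            intro k hk
            simp only [Finset.mem_filter, Finset.mem_range] at hk ⊢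
            exact hk.2
          exact_mod_cast (Finset.card_le_card hsub).trans_eq (Finset.card_range _)
  · set s := (Finset.range N).filter (fun k => ¬ k < B + C * (m + 1)) with hs
    have hmem : ∀ k ∈ s, B + C * (m + 1) ≤ k := by
      intro k hk
      simp only [hs, Finset.mem_filter, not_lt] at hk
      exact hk.2
    have hdiv : ∀ k ∈ s, m + 1 ≤ (k - B) / C := by
      intro k hk
      have h1 := hmem k hk
      have h2 : (m + 1) * C ≤ k - B := by
        refine Nat.le_sub_of_add_le ?_
        rw [mul_comm (m + 1) C, add_comm]
        exact h1
      exact (Nat.le_div_iff_mul_le (by omega)).2 h2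
    have hfib : ∀ j, (s.filter fun k => (k - B) / C = j).card ≤ C := by
      intro j
      have hsub : s.filter (fun k => (k - B) / C = j)
          ⊆ Finset.Ico (B + C * j) (B + C * j + C) := by
        intro k hk
        simp only [Finset.mem_filter] at hk
        obtain ⟨hk1, hk2⟩ := hk
        have hK := hmem k hk1
        have hBk : B ≤ k := le_trans (Nat.le_add_right _ _) hK
        have hdm := Nat.div_add_mod (k - B) C
        have hmod := Nat.mod_lt (k - B) (show 0 < C by omega)
        rw [hk2] at hdm
        simp only [Finset.mem_Ico]
        obtain ⟨P, hP⟩ : ∃ P, P = C * j := ⟨_, rfl⟩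
        rw [← hP] at hdm ⊢
        omega
      calc (s.filter fun k => (k - B) / C = j).card
          ≤ (Finset.Ico (B + C * j) (B + C * j + C)).card := Finset.card_le_card hsub
        _ = C := by rw [Nat.card_Ico, Nat.add_sub_cancel_left]
    have hcongr : ∑ k ∈ s, f (max m ((k - B) / C)) = ∑ k ∈ s, f ((k - B) / C) :=
      Finset.sum_congr rfl fun k hk => by
        rw [max_eq_right (le_trans (Nat.le_succ m) (hdiv k hk))]
    rw [hcongr]
    exact sum_comp_div_le f hpos hsum C (m + 1) _ s hfib hdiv

private lemma nat_mul_f_tendsto (f : ℕ → ℝ) (hpos : ∀ k, 0 ≤ f k) (hanti : Antitone f)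
    (hsum : Summable f) : Tendsto (fun m : ℕ => (m : ℝ) * f m) atTop (𝓝 0) := by
  have htail : Tendsto (fun i : ℕ => ∑' k, f (k + i)) atTop (𝓝 0) := tendsto_sum_nat_add f
  have hdiv2 : Tendsto (fun m : ℕ => m / 2) atTop atTop :=
    Filter.tendsto_atTop_atTop.2 fun b => ⟨2 * b, fun a ha => by omega⟩
  have hU : Tendsto (fun m : ℕ => 2 * ∑' k, f (k + m / 2)) atTop (𝓝 0) := by
    simpa using (htail.comp hdiv2).const_mul 2
  refine squeeze_zero (fun m => mul_nonneg (Nat.cast_nonneg m) (hpos m)) (fun m => ?_) hU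
  have h1 : (m - m / 2) • f m ≤ ∑ k ∈ Finset.Ico (m / 2) m, f k := by
    have := Finset.card_nsmul_le_sum (Finset.Ico (m / 2) m) f (f m)
      (fun k hk => hanti (le_of_lt (Finset.mem_Ico.1 hk).2))
    rwa [Nat.card_Ico] at this
  have h2 : ∑ k ∈ Finset.Ico (m / 2) m, f k ≤ ∑' k, f (k + m / 2) := by
    rw [Finset.sum_Ico_eq_sum_range]
    calc ∑ k ∈ Finset.range (m - m / 2), f (m / 2 + k)
        = ∑ k ∈ Finset.range (m - m / 2), f (k + m / 2) :=
          Finset.sum_congr rfl fun k _ => by rw [add_comm]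
      _ ≤ ∑' k, f (k + m / 2) :=
          Summable.sum_le_tsum _ (fun k _ => hpos _) ((summable_nat_add_iff _).2 hsum)
  have h4 : ((m - m / 2 : ℕ) : ℝ) * f m ≤ ∑' k, f (k + m / 2) := by
    rw [nsmul_eq_mul] at h1
    exact h1.trans h2
  have h3 : (m : ℝ) ≤ 2 * ((m - m / 2 : ℕ) : ℝ) := by
    have : m ≤ 2 * (m - m / 2) := by omega
    exact_mod_cast this
  calc (m : ℝ) * f m ≤ (2 * ((m - m / 2 : ℕ) : ℝ)) * f m :=
        mul_le_mul_of_nonneg_right h3 (hpos m)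
    _ = 2 * (((m - m / 2 : ℕ) : ℝ) * f m) := by ring
    _ ≤ 2 * ∑' k, f (k + m / 2) := by linarith

private lemma karlsson_key {V : Type} (G : GraphDist V) (v : V) (f : ℕ → ℝ)
    (hpos : ∀ k, 0 ≤ f k) (hanti : Antitone f) (hsum : Summable f)
    (C : ℕ) (hC : 1 ≤ C) (n : ℕ) (γ : Fin (n + 1) → V)
    (hqg : ∀ s t : Fin (n + 1), Nat.dist (s : ℕ) (t : ℕ) ≤ C * G.d (γ s) (γ t) + C ^ 2)
    (i₀ : Fin (n + 1)) (hi₀ : ∀ i, G.d v (γ i₀) ≤ G.d v (γ i)) :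
    G.floydLen f v γ ≤
      2 * ((((C * G.d v (γ i₀) + C ^ 2 + 1) + C * (G.d v (γ i₀) + 1) : ℕ) : ℝ)
            * f (G.d v (γ i₀))
        + (C : ℝ) * ∑' j, f (j + (G.d v (γ i₀) + 1))) := by
  classical
  set m := G.d v (γ i₀) with hmdef
  set B := C * m + C ^ 2 + 1 with hBdef
  have hdist : ∀ s : Fin (n + 1), G.d (γ s) (γ i₀) ≤ G.d v (γ s) + m := by
    intro s
    calc G.d (γ s) (γ i₀) ≤ G.d (γ s) v + G.d v (γ i₀) := G.d_tri _ _ _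
      _ = G.d v (γ s) + m := by rw [G.d_symm]
  have hstep : ∀ e : Fin (n + 1),
      Nat.dist (e : ℕ) (i₀ : ℕ) ≤ C * G.d v (γ e) + (C * m + C ^ 2) := by
    intro e
    calc Nat.dist (e : ℕ) (i₀ : ℕ) ≤ C * G.d (γ e) (γ i₀) + C ^ 2 := hqg e i₀
      _ ≤ C * (G.d v (γ e) + m) + C ^ 2 :=
          Nat.add_le_add_right (Nat.mul_le_mul_left C (hdist e)) _
      _ = C * G.d v (γ e) + (C * m + C ^ 2) := by ring
  have hkey : ∀ i : Fin n,
      Nat.dist (i : ℕ) (i₀ : ℕ) ≤ C * min (G.d v (γ i.castSucc)) (G.d v (γ i.succ)) + B := by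
    intro i
    rcases min_cases (G.d v (γ i.castSucc)) (G.d v (γ i.succ)) with ⟨he, _⟩ | ⟨he, _⟩
    · rw [he]
      have h1 := hstep i.castSucc
      have hcs : ((i.castSucc : Fin (n + 1)) : ℕ) = (i : ℕ) := rfl
      rw [hcs] at h1
      calc Nat.dist (i : ℕ) (i₀ : ℕ) ≤ C * G.d v (γ i.castSucc) + (C * m + C ^ 2) := h1
        _ ≤ C * G.d v (γ i.castSucc) + B := by
            refine Nat.add_le_add_left ?_ _
            rw [hBdef]
            exact Nat.le_succ _
    · rw [he]
      have h1 := hstep i.succ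
      have hcs : ((i.succ : Fin (n + 1)) : ℕ) = (i : ℕ) + 1 := Fin.val_succ i
      rw [hcs] at h1
      have htri : Nat.dist (i : ℕ) (i₀ : ℕ) ≤ Nat.dist ((i : ℕ) + 1) (i₀ : ℕ) + 1 := by
        simp only [Nat.dist]
        omega
      calc Nat.dist (i : ℕ) (i₀ : ℕ) ≤ Nat.dist ((i : ℕ) + 1) (i₀ : ℕ) + 1 := htri
        _ ≤ (C * G.d v (γ i.succ) + (C * m + C ^ 2)) + 1 := Nat.add_le_add_right h1 1
        _ = C * G.d v (γ i.succ) + B := by rw [hBdef]; ring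
  have hedge : ∀ i : Fin n,
      f (min (G.d v (γ i.castSucc)) (G.d v (γ i.succ)))
        ≤ f (max m ((Nat.dist (i : ℕ) (i₀ : ℕ) - B) / C)) := by
    intro i
    apply hanti
    apply max_le
    · exact le_min (hi₀ _) (hi₀ _)
    · have h2 : Nat.dist (i : ℕ) (i₀ : ℕ) - B
          ≤ C * min (G.d v (γ i.castSucc)) (G.d v (γ i.succ)) :=
        Nat.sub_le_of_le_add (hkey i)
      calc (Nat.dist (i : ℕ) (i₀ : ℕ) - B) / C
          ≤ (C * min (G.d v (γ i.castSucc)) (G.d v (γ i.succ))) / C :=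
            Nat.div_le_div_right h2
        _ = min (G.d v (γ i.castSucc)) (G.d v (γ i.succ)) :=
            Nat.mul_div_cancel_left _ (by omega)
  have step1 : G.floydLen f v γ
      ≤ ∑ i ∈ Finset.range n, f (max m ((Nat.dist i (i₀ : ℕ) - B) / C)) := by
    rw [GraphDist.floydLen]
    calc ∑ i : Fin n, f (min (G.d v (γ i.castSucc)) (G.d v (γ i.succ)))
        ≤ ∑ i : Fin n, f (max m ((Nat.dist (i : ℕ) (i₀ : ℕ) - B) / C)) :=
          Finset.sum_le_sum fun i _ => hedge i
      _ = ∑ i ∈ Finset.range n, f (max m ((Nat.dist i (i₀ : ℕ) - B) / C)) :=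
          Fin.sum_univ_eq_sum_range (fun j => f (max m ((Nat.dist j (i₀ : ℕ) - B) / C))) n
  have step2 : ∑ i ∈ Finset.range n, f (max m ((Nat.dist i (i₀ : ℕ) - B) / C))
      ≤ 2 * ∑ k ∈ Finset.range (n + 1), f (max m ((k - B) / C)) :=
    sum_dist_le (fun k => f (max m ((k - B) / C))) (fun k => hpos _) (i₀ : ℕ) n (Fin.is_le i₀)
  have step3 := sum_g_le f hpos hanti hsum C B m (n + 1) hC
  calc G.floydLen f v γ
      ≤ ∑ i ∈ Finset.range n, f (max m ((Nat.dist i (i₀ : ℕ) - B) / C)) := step1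
    _ ≤ 2 * ∑ k ∈ Finset.range (n + 1), f (max m ((k - B) / C)) := step2
    _ ≤ 2 * (((B + C * (m + 1) : ℕ) : ℝ) * f m + (C : ℝ) * ∑' j, f (j + (m + 1))) := by
        linarith [step3]

end KarlssonAux

set_option maxHeartbeats 1600000 in
/-- Karlsson's Lemma for quasigeodesics: for every `ε > 0` there is
a finite set `D` of vertices such that every `c`-quasigeodesic path avoiding `D`
has Floyd length `< ε`. -/
theorem stmt3 {V : Type} (G : GraphDist V) (v : V)
    (f : ℕ → ℝ) (K : ℝ) (hK : 0 < K) (hf : IsFloydFunction f K)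
    (c : ℝ) (hc : 0 < c) :
    ∀ ε : ℝ, 0 < ε → ∃ D : Set V, D.Finite ∧
      ∀ (n : ℕ) (γ : Fin (n + 1) → V), G.IsQuasigeodesic c γ →
        (∀ i, γ i ∉ D) → G.floydLen f v γ < ε := by
  classical
  obtain ⟨hfpos, hfrat, hfsum⟩ := hf
  have hanti : Antitone f := antitone_nat_of_succ_le fun k => by
    have h1 := (hfrat k).1
    have h2 := hfpos (k + 1)
    rw [le_div_iff₀ h2] at h1
    linarith
  set C : ℕ := ⌈c⌉₊ with hCdef
  have hC1 : 1 ≤ C := Nat.ceil_pos.2 hc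
  have hcC : c ≤ (C : ℝ) := Nat.le_ceil c
  intro ε hε
  have htail : Tendsto (fun m : ℕ => ∑' j, f (j + (m + 1))) atTop (𝓝 0) :=
    (tendsto_sum_nat_add f).comp (tendsto_add_atTop_nat 1)
  have hnf := nat_mul_f_tendsto f (fun k => (hfpos k).le) hanti hfsum
  have hf0 : Tendsto (fun m : ℕ => f m) atTop (𝓝 0) := hfsum.tendsto_atTop_zero
  have hBnd : Tendsto (fun m : ℕ =>
      2 * ((((C * m + C ^ 2 + 1) + C * (m + 1) : ℕ) : ℝ) * f m
        + (C : ℝ) * ∑' j, f (j + (m + 1)))) atTop (𝓝 0) := by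
    have heq : ∀ m : ℕ, 2 * ((((C * m + C ^ 2 + 1) + C * (m + 1) : ℕ) : ℝ) * f m
        + (C : ℝ) * ∑' j, f (j + (m + 1)))
        = (4 * (C : ℝ)) * ((m : ℝ) * f m) + (2 * ((C : ℝ) ^ 2 + C + 1)) * f m
          + (2 * (C : ℝ)) * ∑' j, f (j + (m + 1)) := by
      intro m
      push_cast
      ring
    simp only [heq]
    have := ((hnf.const_mul (4 * (C : ℝ))).add (hf0.const_mul (2 * ((C : ℝ) ^ 2 + C + 1)))).add
      (htail.const_mul (2 * (C : ℝ)))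
    simpa using this
  obtain ⟨R, hR⟩ := Filter.eventually_atTop.1 (hBnd.eventually_lt_const hε)
  refine ⟨{y | G.d v y ≤ R}, G.locallyFinite v R, ?_⟩
  intro n γ hγ hD
  obtain ⟨i₀, -, hi₀'⟩ := Finset.exists_min_image Finset.univ (fun i => G.d v (γ i))
    ⟨0, Finset.mem_univ 0⟩
  have hi₀ : ∀ i, G.d v (γ i₀) ≤ G.d v (γ i) := fun i => hi₀' i (Finset.mem_univ i)
  have hqgnat : ∀ s t : Fin (n + 1), Nat.dist (s : ℕ) (t : ℕ) ≤ C * G.d (γ s) (γ t) + C ^ 2 := by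
    intro s t
    have h := (hγ.2 s t).1
    have habs : |((s : ℕ) : ℝ) - ((t : ℕ) : ℝ)| = (Nat.dist (s : ℕ) (t : ℕ) : ℝ) :=
      (natDist_cast_real _ _).symm
    rw [habs] at h
    have h3 : (1 / c) * (Nat.dist (s : ℕ) (t : ℕ) : ℝ) ≤ (G.d (γ s) (γ t) : ℝ) + c := by
      linarith
    have h4 := mul_le_mul_of_nonneg_left h3 hc.le
    rw [← mul_assoc, mul_one_div_cancel hc.ne', one_mul, mul_add] at h4
    have hd0 : (0 : ℝ) ≤ (G.d (γ s) (γ t) : ℝ) := Nat.cast_nonneg _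
    have hcd : c * (G.d (γ s) (γ t) : ℝ) ≤ (C : ℝ) * (G.d (γ s) (γ t) : ℝ) :=
      mul_le_mul_of_nonneg_right hcC hd0
    have hcc : c * c ≤ (C : ℝ) * (C : ℝ) := mul_le_mul hcC hcC hc.le (Nat.cast_nonneg C)
    have h6 : ((Nat.dist (s : ℕ) (t : ℕ)) : ℝ) ≤ ((C * G.d (γ s) (γ t) + C ^ 2 : ℕ) : ℝ) := by
      push_cast
      rw [pow_two]
      linarith
    exact_mod_cast h6
  have hmR : R ≤ G.d v (γ i₀) := by
    have h := hD i₀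
    simp only [Set.mem_setOf_eq] at h
    omega
  have hKey := karlsson_key G v f (fun k => (hfpos k).le) hanti hfsum C hC1 n γ hqgnat i₀ hi₀
  exact lt_of_le_of_lt hKey (hR _ hmR)
end

section
/- Let Γ be a locally finite connected graph with basepoint v, let α be a distortion function and f a Floyd scaling function with ∑_{n} α(2n+1) f(n) < ∞. Then for every ε > 0 there exists r > 0 such that every α-distorted path γ : I → Γ with d(v, γ(I)) > r has Floyd length L_{f,v}(γ) < ε. (Generalized Karlsson Lemma.) -/
open Filter Topology

/-!
An edge at level `m` has an endpoint on the sphere of radius `m` about `v`. Two such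
endpoints are at distance `≤ 2m`, so an `α`-path passes through them at times at most
`α (2m)` apart; hence it has at most `α (2m) + 2 ≤ 3 α (2m + 1)` edges at level `m`.
The Floyd length of a path beyond distance `r` is therefore at most
`3 ∑_{m > r} α (2m + 1) f m`, a tail of a convergent series.
-/

theorem Finset.card_le_of_forall_natDist_le {S : Finset ℕ} {D : ℝ} (hD : 0 ≤ D)
    (h : ∀ i ∈ S, ∀ j ∈ S, (Nat.dist i j : ℝ) ≤ D) : (S.card : ℝ) ≤ D + 1 := by
  rcases S.eq_empty_or_nonempty with rfl | hS
  · simp only [Finset.card_empty, Nat.cast_zero]; linarith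
  have hcard : S.card ≤ Nat.dist (S.max' hS) (S.min' hS) + 1 := by
    have hsub : S ⊆ Finset.Icc (S.min' hS) (S.max' hS) :=
      fun i hi => Finset.mem_Icc.mpr ⟨S.min'_le i hi, S.le_max' i hi⟩
    have := Finset.card_le_card hsub
    rw [Nat.card_Icc] at this
    unfold Nat.dist
    omega
  calc (S.card : ℝ) ≤ Nat.dist (S.max' hS) (S.min' hS) + 1 := by exact_mod_cast hcard
    _ ≤ D + 1 := by gcongr; exact h _ (S.max'_mem hS) _ (S.min'_mem hS)

namespace GraphDist

variable {V : Type} (G : GraphDist V)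

/-- `d(v, {x, y})` for the `i`-th edge `{x, y}` of `γ`. -/
def edgeLevel (v : V) {n : ℕ} (γ : Fin (n + 1) → V) (i : Fin n) : ℕ :=
  min (G.d v (γ i.castSucc)) (G.d v (γ i.succ))

variable {G}

theorem exists_endpoint_edgeLevel (v : V) {n : ℕ} (γ : Fin (n + 1) → V) (i : Fin n) :
    ∃ s : Fin (n + 1), G.d v (γ s) = G.edgeLevel v γ i ∧ (i : ℕ) ≤ s ∧ (s : ℕ) ≤ i + 1 := by
  rcases le_total (G.d v (γ i.castSucc)) (G.d v (γ i.succ)) with h | h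
  · exact ⟨i.castSucc, (min_eq_left h).symm, by simp⟩
  · exact ⟨i.succ, (min_eq_right h).symm, by simp⟩

theorem IsAlphaPath.natDist_le {α : ℕ → ℝ} (hmono : Monotone α) {n : ℕ}
    {γ : Fin (n + 1) → V} (hγ : G.IsAlphaPath α γ) {v : V} {m : ℕ} {s t : Fin (n + 1)}
    (hs : G.d v (γ s) ≤ m) (ht : G.d v (γ t) ≤ m) :
    (Nat.dist s t : ℝ) ≤ α (2 * m) := by
  have hst : G.d (γ s) (γ t) ≤ 2 * m := by
    calc G.d (γ s) (γ t) ≤ G.d (γ s) v + G.d v (γ t) := G.d_tri _ _ _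
      _ ≤ 2 * m := by rw [G.d_symm]; omega
  exact (hγ.2 s t).2.trans (hmono hst)

theorem IsAlphaPath.card_edgeLevel_eq_le {α : ℕ → ℝ} (hmono : Monotone α)
    (hα : ∀ n : ℕ, (n : ℝ) ≤ α n) {n : ℕ} {γ : Fin (n + 1) → V}
    (hγ : G.IsAlphaPath α γ) (v : V) (m : ℕ) :
    ((Finset.univ.filter fun i => G.edgeLevel v γ i = m).card : ℝ) ≤ α (2 * m) + 2 := by
  set S := Finset.univ.filter fun i => G.edgeLevel v γ i = m
  have hclose : ∀ i ∈ S.map Fin.valEmbedding, ∀ j ∈ S.map Fin.valEmbedding,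
      (Nat.dist i j : ℝ) ≤ α (2 * m) + 1 := by
    simp only [Finset.mem_map, Finset.mem_filter, Finset.mem_univ, true_and, S]
    rintro _ ⟨i, rfl, rfl⟩ _ ⟨j, hj, rfl⟩
    obtain ⟨s, hs, hs_i⟩ := exists_endpoint_edgeLevel v γ i
    obtain ⟨t, ht, ht_j⟩ := exists_endpoint_edgeLevel v γ j
    have hij : Nat.dist i j ≤ Nat.dist s t + 1 := by
      unfold Nat.dist
      omega
    calc (Nat.dist i j : ℝ) ≤ Nat.dist s t + 1 := by exact_mod_cast hij
      _ ≤ α (2 * G.edgeLevel v γ i) + 1 := by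
        gcongr; exact hγ.natDist_le hmono hs.le (ht.trans hj).le
  have hD : 0 ≤ α (2 * m) + 1 := by linarith [hα (2 * m), (2 * m).cast_nonneg (α := ℝ)]
  simpa [add_assoc, one_add_one_eq_two] using Finset.card_le_of_forall_natDist_le hD hclose

theorem IsAlphaPath.floydLen_le {α : ℕ → ℝ} (hmono : Monotone α)
    (hα : ∀ n : ℕ, (n : ℝ) ≤ α n) {f : ℕ → ℝ} (hf : ∀ n, 0 ≤ f n) {n : ℕ}
    {γ : Fin (n + 1) → V} (hγ : G.IsAlphaPath α γ) (v : V) :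
    G.floydLen f v γ ≤ ∑ m ∈ Finset.univ.image (G.edgeLevel v γ), 3 * (α (2 * m + 1) * f m) := by
  calc G.floydLen f v γ = ∑ i, f (G.edgeLevel v γ i) := rfl
    _ = ∑ m ∈ Finset.univ.image (G.edgeLevel v γ),
          (Finset.univ.filter fun i => G.edgeLevel v γ i = m).card • f m :=
      Finset.sum_comp f _
    _ ≤ _ := by
      refine Finset.sum_le_sum fun m _ => ?_
      have hcard := hγ.card_edgeLevel_eq_le hmono hα v m
      have hone : (1 : ℝ) ≤ α (2 * m + 1) := by
        have := hα (2 * m + 1); push_cast at this; linarith [m.cast_nonneg (α := ℝ)]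
      have hstep : α (2 * m) ≤ α (2 * m + 1) := hmono (Nat.le_succ _)
      rw [nsmul_eq_mul, ← mul_assoc]
      exact mul_le_mul_of_nonneg_right (by linarith) (hf m)

end GraphDist

theorem stmt4_general {V : Type} (G : GraphDist V) (v : V)
    (f : ℕ → ℝ) (hfpos : ∀ n, 0 < f n)
    (α : ℕ → ℝ) (hα : IsDistortion α)
    (hadm : Summable (fun n => α (2 * n + 1) * f n)) :
    ∀ ε : ℝ, 0 < ε → ∃ r : ℕ, ∀ (n : ℕ) (γ : Fin (n + 1) → V),
      G.IsAlphaPath α γ → (∀ i, r < G.d v (γ i)) →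
      G.floydLen f v γ < ε := by
  intro ε hε
  obtain ⟨s, hs⟩ := summable_iff_vanishing.1 (hadm.mul_left 3) (Set.Iio ε) (Iio_mem_nhds hε)
  obtain ⟨r, hr⟩ := s.exists_nat_subset_range
  refine ⟨r, fun n γ hγ hfar => ?_⟩
  have hdisj : Disjoint (Finset.univ.image (G.edgeLevel v γ)) s := by
    refine Finset.disjoint_left.2 fun m hm hms => ?_
    obtain ⟨i, -, rfl⟩ := Finset.mem_image.1 hm
    have hfar_i : r < G.edgeLevel v γ i := lt_min (hfar _) (hfar _)
    exact lt_asymm hfar_i (Finset.mem_range.1 (hr hms))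
  exact (hγ.floydLen_le hα.2.1 hα.2.2 (fun m => (hfpos m).le) v).trans_lt (hs _ hdisj)

/-- Generalized Karlsson Lemma: if `∑ α(2n+1) f(n) < ∞`, then for
every `ε > 0` there is `r` such that every `α`-distorted path staying at graph
distance `> r` from the basepoint has Floyd length `< ε`. -/
theorem stmt4 {V : Type} (G : GraphDist V) (v : V)
    (f : ℕ → ℝ) (K : ℝ) (hK : 0 < K) (hfpos : ∀ n, 0 < f n)
    (hratio : ∀ n, 1 ≤ f n / f (n + 1) ∧ f n / f (n + 1) ≤ K)
    (α : ℕ → ℝ) (hα : IsDistortion α)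
    (hadm : Summable (fun n => α (2 * n + 1) * f n)) :
    ∀ ε : ℝ, 0 < ε → ∃ r : ℕ, ∀ (n : ℕ) (γ : Fin (n + 1) → V),
      G.IsAlphaPath α γ → (∀ i, r < G.d v (γ i)) →
      G.floydLen f v γ < ε :=
  stmt4_general G v f hfpos α hα hadm
end

section
/- Let Γ be a locally finite connected graph with Floyd scaling function f. Every c-quasigeodesic ray r : ℕ → Γ is a Cauchy sequence for the Floyd metric δ_{f,v}; hence it converges to a point of the Floyd boundary ∂_f Γ (the Cauchy completion minus Γ). -/
open Filter Topology

/-- every `c`-quasigeodesic ray in a locally finite connected graph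
is a Cauchy sequence for the Floyd metric (hence converges to a point of the
Floyd boundary, the Cauchy completion minus the vertex set). -/
theorem stmt5 {V : Type} (G : GraphDist V) (v : V)
    (f : ℕ → ℝ) (K : ℝ) (hK : 0 < K) (hf : IsFloydFunction f K)
    (c : ℝ) (hc : 0 < c) (r : ℕ → V) (hr : G.IsQuasigeodesicRay c r) :
    ∀ ε : ℝ, 0 < ε → ∃ N : ℕ, ∀ m : ℕ, N ≤ m → ∀ n : ℕ, N ≤ n →
      G.floydDist f v (r m) (r n) < ε := by

  classical
  obtain ⟨hfpos, hfrat, hfsum⟩ := hf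
  obtain ⟨hstep, hqg⟩ := hr
  have hfanti : Antitone f := by
    apply antitone_nat_of_succ_le
    intro n
    have h1 := (hfrat n).1
    have h2 := hfpos (n + 1)
    rw [le_div_iff₀ h2] at h1
    linarith
  set d0 : ℕ := G.d v (r 0) with hd0
  set C : ℕ := ⌈c⌉₊ with hCdef
  have hC0 : 0 < C := Nat.ceil_pos.mpr hc
  have hCc : c ≤ (C : ℝ) := Nat.le_ceil c
  set D : ℕ := C + d0 with hDdef
  set L : ℕ → ℕ := fun i => i / C - D with hLdef
  have hLmono : Monotone L := fun a b hab =>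
    Nat.sub_le_sub_right (Nat.div_le_div_right hab) D
  have hLd : ∀ i, L i ≤ G.d v (r i) := by
    intro i
    by_cases hcase : i / C ≤ D
    · have : L i = 0 := by simp only [hLdef]; omega
      omega
    · push_neg at hcase
      have hqi := (hqg 0 i).1
      simp only [Nat.cast_zero, zero_sub, abs_neg, Nat.abs_cast] at hqi
      have htri : (G.d (r 0) (r i) : ℝ) ≤ (d0 : ℝ) + G.d v (r i) := by
        have h1 := G.d_tri (r 0) v (r i)
        have h2 : G.d (r 0) v = d0 := by rw [G.d_symm]
        push_cast [← h2]
        exact_mod_cast h1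
      have hdc : (i : ℝ) / c - c - d0 ≤ G.d v (r i) := by
        have h0 : (i : ℝ) / c = 1 / c * i := by ring
        rw [h0]
        linarith [hqi, htri]
      have hcast : ((L i : ℕ) : ℝ) ≤ ((i / C : ℕ) : ℝ) - D := by
        have : L i = i / C - D := rfl
        rw [this, Nat.cast_sub hcase.le]
      have h3 : ((i / C : ℕ) : ℝ) ≤ (i : ℝ) / C := Nat.cast_div_le
      have h4 : (i : ℝ) / C ≤ (i : ℝ) / c := by
        gcongr
      have h5 : (c : ℝ) + d0 ≤ (D : ℝ) := by
        have : (C : ℝ) + d0 ≤ D := by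
          rw [hDdef]; push_cast; linarith
        linarith
      have : ((L i : ℕ) : ℝ) ≤ (G.d v (r i) : ℝ) := by
        calc ((L i : ℕ) : ℝ) ≤ ((i / C : ℕ) : ℝ) - D := hcast
          _ ≤ (i : ℝ) / c - c - d0 := by linarith
          _ ≤ _ := hdc
      exact_mod_cast this
  have hbdd : ∀ a b : V, BddBelow {Lv | ∃ (n : ℕ) (γ : Fin (n + 1) → V), G.IsPath γ ∧ γ 0 = a ∧
      γ (Fin.last n) = b ∧ Lv = G.floydLen f v γ} := by
    intro a b
    refine ⟨0, ?_⟩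
    rintro x ⟨n, γ, -, -, -, rfl⟩
    exact Finset.sum_nonneg fun i _ => (hfpos _).le
  have key : ∀ a b : ℕ, a ≤ b →
      G.floydDist f v (r a) (r b) ≤ ∑ i ∈ Finset.Ico a b, f (L i) ∧
      G.floydDist f v (r b) (r a) ≤ ∑ i ∈ Finset.Ico a b, f (L i) := by
    intro a b hab
    have hIco : ∑ i ∈ Finset.Ico a b, f (L i) = ∑ j ∈ Finset.range (b - a), f (L (a + j)) :=
      Finset.sum_Ico_eq_sum_range (fun i => f (L i)) a b
    constructor
    · -- forward path
      have hpath : G.IsPath (fun j : Fin (b - a + 1) => r (a + (j : ℕ))) := by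
        intro i
        simp only [Fin.coe_castSucc, Fin.val_succ]
        have := hstep (a + (i : ℕ))
        simpa [← add_assoc] using this
      have hmem : G.floydLen f v (fun j : Fin (b - a + 1) => r (a + (j : ℕ))) ∈
          {Lv | ∃ (n : ℕ) (γ : Fin (n + 1) → V), G.IsPath γ ∧ γ 0 = r a ∧
            γ (Fin.last n) = r b ∧ Lv = G.floydLen f v γ} := by
        refine ⟨b - a, _, hpath, by simp, ?_, rfl⟩
        simp only [Fin.val_last]
        congr 1
        omega
      refine le_trans (csInf_le (hbdd _ _) hmem) ?_
      rw [hIco]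
      calc G.floydLen f v (fun j : Fin (b - a + 1) => r (a + (j : ℕ)))
          ≤ ∑ i : Fin (b - a), f (L (a + (i : ℕ))) := by
            refine Finset.sum_le_sum fun i _ => ?_
            apply hfanti
            simp only [Fin.coe_castSucc, Fin.val_succ]
            refine le_min (hLd _) ?_
            have h1 : L (a + (i : ℕ)) ≤ L (a + (i : ℕ) + 1) := hLmono (by omega)
            have h2 := hLd (a + (i : ℕ) + 1)
            have e : a + ((i : ℕ) + 1) = a + (i : ℕ) + 1 := by omega
            rw [e]
            exact le_trans h1 h2
        _ = ∑ j ∈ Finset.range (b - a), f (L (a + j)) :=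
            Fin.sum_univ_eq_sum_range (fun j => f (L (a + j))) (b - a)
    · -- backward path
      have hpath : G.IsPath (fun j : Fin (b - a + 1) => r (b - (j : ℕ))) := by
        intro i
        have hi : (i : ℕ) < b - a := i.isLt
        simp only [Fin.coe_castSucc, Fin.val_succ]
        have hk : b - (i : ℕ) = (b - ((i : ℕ) + 1)) + 1 := by omega
        rw [hk, G.d_symm]
        exact hstep _
      have hmem : G.floydLen f v (fun j : Fin (b - a + 1) => r (b - (j : ℕ))) ∈
          {Lv | ∃ (n : ℕ) (γ : Fin (n + 1) → V), G.IsPath γ ∧ γ 0 = r b ∧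
            γ (Fin.last n) = r a ∧ Lv = G.floydLen f v γ} := by
        refine ⟨b - a, _, hpath, by simp, ?_, rfl⟩
        simp only [Fin.val_last]
        congr 1
        omega
      refine le_trans (csInf_le (hbdd _ _) hmem) ?_
      rw [hIco]
      calc G.floydLen f v (fun j : Fin (b - a + 1) => r (b - (j : ℕ)))
          ≤ ∑ i : Fin (b - a), f (L (b - 1 - (i : ℕ))) := by
            refine Finset.sum_le_sum fun i _ => ?_
            apply hfanti
            have hi : (i : ℕ) < b - a := i.isLt
            simp only [Fin.coe_castSucc, Fin.val_succ]
            have e1 : b - ((i : ℕ) + 1) = b - 1 - (i : ℕ) := by omega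
            refine le_min (le_trans (hLmono (by omega : b - 1 - (i : ℕ) ≤ b - (i : ℕ))) (hLd _)) ?_
            rw [e1] at *
            exact hLd _
        _ = ∑ j ∈ Finset.range (b - a), f (L (b - 1 - j)) :=
            Fin.sum_univ_eq_sum_range (fun j => f (L (b - 1 - j))) (b - a)
        _ = ∑ j ∈ Finset.range (b - a), f (L (a + j)) := by
            rw [← Finset.sum_range_reflect (fun j => f (L (a + j))) (b - a)]
            refine Finset.sum_congr rfl fun j hj => ?_
            have hj' := Finset.mem_range.mp hj
            have : b - 1 - j = a + (b - a - 1 - j) := by omega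
            rw [this]
  intro ε hε
  have hCreal : (0 : ℝ) < C := by exact_mod_cast hC0
  have hεC : 0 < ε / C := div_pos hε hCreal
  -- find a tail index q
  obtain ⟨q, hq⟩ : ∃ q : ℕ, ∑' k, f (k + q) < ε / C := by
    have htends := hfsum.hasSum.tendsto_sum_nat
    obtain ⟨q, hq⟩ := (htends.eventually (Metric.ball_mem_nhds (∑' i, f i) hεC)).exists
    refine ⟨q, ?_⟩
    have hsplit : ∑ i ∈ Finset.range q, f i + ∑' k, f (k + q) = ∑' i, f i :=
      Summable.sum_add_tsum_nat_add q hfsum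
    have hq' : dist (∑ i ∈ Finset.range q, f i) (∑' i, f i) < ε / C := hq
    rw [Real.dist_eq, abs_sub_lt_iff] at hq'
    linarith [hq'.2]
  have hfsum' : Summable fun k => f (k + q) := (summable_nat_add_iff q).mpr hfsum
  refine ⟨C * (q + D + 1), fun m hm n hn => ?_⟩
  have hLge : ∀ i : ℕ, C * (q + D + 1) ≤ i → q + 1 ≤ L i := by
    intro i hi
    have h1 : q + D + 1 ≤ i / C := by
      rw [Nat.le_div_iff_mul_le hC0, Nat.mul_comm]
      exact hi
    simp only [hLdef]
    omega
  have hsum : ∀ a b : ℕ, C * (q + D + 1) ≤ a → ∑ i ∈ Finset.Ico a b, f (L i) < ε := by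
    intro a b ha
    set s := Finset.Ico a b with hs
    have hmemge : ∀ k ∈ s.image L, q + 1 ≤ k := by
      intro k hk
      obtain ⟨i₀, hi₀, hLi₀⟩ := Finset.mem_image.mp hk
      have := hLge i₀ (le_trans ha (Finset.mem_Ico.mp hi₀).1)
      omega
    have hcard : ∀ k ∈ s.image L, ((s.filter fun i => L i = k).card : ℝ) ≤ (C : ℝ) := by
      intro k hk
      have hk1 := hmemge k hk
      have hsub : (s.filter fun i => L i = k) ⊆ Finset.Ico (C * (k + D)) (C * (k + D) + C) := by
        intro i hi
        obtain ⟨his, hLi⟩ := Finset.mem_filter.mp hi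
        have hdiv : i / C = k + D := by
          simp only [hLdef] at hLi
          omega
        have h1 : (k + D) * C ≤ i := (Nat.le_div_iff_mul_le hC0).1 (by omega)
        have h2 : i < (k + D + 1) * C := (Nat.div_lt_iff_lt_mul hC0).1 (by omega)
        rw [Finset.mem_Ico]
        constructor
        · rw [Nat.mul_comm]; exact h1
        · have e2 : C * (k + D) + C = (k + D + 1) * C := by ring
          rw [e2]; exact h2
      have := Finset.card_le_card hsub
      rw [Nat.card_Ico] at this
      have : (s.filter fun i => L i = k).card ≤ C := by omega
      exact_mod_cast this
    have hstep1 : ∑ i ∈ s, f (L i) ≤ (C : ℝ) * ∑ k ∈ s.image L, f k := by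
      rw [Finset.sum_comp f L, Finset.mul_sum]
      refine Finset.sum_le_sum fun k hk => ?_
      rw [nsmul_eq_mul]
      exact mul_le_mul_of_nonneg_right (hcard k hk) (hfpos k).le
    have hstep2 : ∑ k ∈ s.image L, f k ≤ ∑' j, f (j + q) := by
      have hinj : Set.InjOn (fun k => k - q) ↑(s.image L) := by
        intro k1 hk1 k2 hk2 he
        have h1 := hmemge k1 (by exact_mod_cast hk1)
        have h2 := hmemge k2 (by exact_mod_cast hk2)
        simp only at he
        omega
      have himg : ∑ j ∈ (s.image L).image (fun k => k - q), f (j + q)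
          = ∑ k ∈ s.image L, f ((k - q) + q) := Finset.sum_image (fun k1 h1 k2 h2 he => hinj h1 h2 he)
      have hcongr : ∑ k ∈ s.image L, f ((k - q) + q) = ∑ k ∈ s.image L, f k := by
        refine Finset.sum_congr rfl fun k hk => ?_
        have := hmemge k hk
        congr 1
        omega
      rw [← hcongr, ← himg]
      exact Summable.sum_le_tsum _ (fun j _ => (hfpos _).le) hfsum'
    calc ∑ i ∈ s, f (L i) ≤ (C : ℝ) * ∑ k ∈ s.image L, f k := hstep1
      _ ≤ (C : ℝ) * ∑' j, f (j + q) := by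
          exact mul_le_mul_of_nonneg_left hstep2 hCreal.le
      _ < (C : ℝ) * (ε / C) := by
          exact mul_lt_mul_of_pos_left hq hCreal
      _ = ε := by field_simp
  rcases le_total m n with h | h
  · exact lt_of_le_of_lt (key m n h).1 (hsum m n hm)
  · exact lt_of_le_of_lt (key n m h).2 (hsum n m hn)
end

section
/- Let Γ be a locally finite connected graph with admissible pair (f, α) (i.e. ∑ α(2n+1) f(n) < ∞). Then every α-geodesic ray r : ℕ → Γ is Cauchy for the Floyd metric δ_{f,v} and converges to a point of the Floyd boundary ∂_f Γ. -/
open Filter Topology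

/-!
An `α`-geodesic ray `r` can return to the sphere of radius `k` about `v` only at times
`s ≤ α (k + d(v, r 0))`, so it visits that sphere at most `α (k + d(v, r 0)) + 1` times.
The segment of `r` between times `m ≤ n` is a path whose Floyd length is therefore at most
`2K ∑ α(2k+1) f(k)`, the sum running over the radii `k` it visits. Since `r` escapes to
infinity, for large `m` these radii are all large, and admissibility makes that sum small.
-/

section ScalingFunction

variable {f : ℕ → ℝ} {K : ℝ}

theorem antitone_of_one_le_div_succ (hfpos : ∀ n, 0 < f n)
    (hratio : ∀ n, 1 ≤ f n / f (n + 1)) : Antitone f :=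
  antitone_nat_of_succ_le fun n => by
    simpa using (le_div_iff₀ (hfpos (n + 1))).1 (hratio n)

theorem apply_le_mul_apply_of_le_succ (hfpos : ∀ n, 0 < f n)
    (hratio : ∀ n, 1 ≤ f n / f (n + 1) ∧ f n / f (n + 1) ≤ K) {i j : ℕ}
    (hij : i ≤ j + 1) :
    f j ≤ K * f i := by
  rcases Nat.lt_or_ge j i with hji | hij'
  · obtain rfl : i = j + 1 := by omega
    exact (div_le_iff₀ (hfpos (j + 1))).1 (hratio j).2
  · have hK : 1 ≤ K := (hratio 0).1.trans (hratio 0).2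
    calc f j ≤ f i := antitone_of_one_le_div_succ hfpos (fun n => (hratio n).1) hij'
      _ ≤ K * f i := le_mul_of_one_le_left (hfpos i).le hK

end ScalingFunction

theorem exists_sum_lt_of_summable {T : ℕ → ℝ} (hT : Summable T) {δ : ℝ} (hδ : 0 < δ) :
    ∃ k₀, ∀ t : Finset ℕ, (∀ k ∈ t, k₀ ≤ k) → ∑ k ∈ t, T k < δ := by
  obtain ⟨s, hs⟩ := summable_iff_vanishing.1 hT (Set.Iio δ) (Iio_mem_nhds hδ)
  refine ⟨s.sup id + 1, fun t ht => hs t (Finset.disjoint_left.2 fun k hkt hks => ?_)⟩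
  have : k ≤ s.sup id := Finset.le_sup (f := id) hks
  have := ht k hkt
  omega

namespace GraphDist

variable {V : Type} (G : GraphDist V)

theorem floydLen_comp_rev (f : ℕ → ℝ) (v : V) {n : ℕ} (γ : Fin (n + 1) → V) :
    G.floydLen f v (γ ∘ Fin.rev) = G.floydLen f v γ :=
  Fintype.sum_bijective Fin.rev Fin.rev_involutive.bijective _ _ fun i => by
    simp only [Function.comp_apply, Fin.rev_castSucc, Fin.rev_succ, min_comm]

theorem IsPath.comp_rev {G : GraphDist V} {n : ℕ} {γ : Fin (n + 1) → V} (hγ : G.IsPath γ) :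
    G.IsPath (γ ∘ Fin.rev) := fun i => by
  simpa only [Function.comp_apply, Fin.rev_castSucc, Fin.rev_succ, G.d_symm] using hγ i.rev

theorem floydDist_comm (f : ℕ → ℝ) (v a b : V) :
    G.floydDist f v a b = G.floydDist f v b a := by
  suffices h : ∀ a b : V,
      {L | ∃ (n : ℕ) (γ : Fin (n + 1) → V), G.IsPath γ ∧ γ 0 = a ∧
      γ (Fin.last n) = b ∧ L = G.floydLen f v γ} ⊆
      {L | ∃ (n : ℕ) (γ : Fin (n + 1) → V), G.IsPath γ ∧ γ 0 = b ∧
      γ (Fin.last n) = a ∧ L = G.floydLen f v γ} from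
    congrArg sInf ((h a b).antisymm (h b a))
  rintro a b L ⟨n, γ, hγ, rfl, rfl, rfl⟩
  exact ⟨n, γ ∘ Fin.rev, hγ.comp_rev, by simp, by simp, (G.floydLen_comp_rev f v γ).symm⟩

theorem floydDist_le_floydLen {f : ℕ → ℝ} (hf : ∀ n, 0 ≤ f n) (v : V) {n : ℕ}
    {γ : Fin (n + 1) → V} (hγ : G.IsPath γ) :
    G.floydDist f v (γ 0) (γ (Fin.last n)) ≤ G.floydLen f v γ :=
  csInf_le ⟨0, by
    rintro _ ⟨_, _, -, -, -, rfl⟩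
    exact Finset.sum_nonneg fun i _ => hf _⟩ ⟨n, γ, hγ, rfl, rfl, rfl⟩

theorem floydDist_le_sum_Ico {f : ℕ → ℝ} (hf : ∀ n, 0 ≤ f n) (v : V) {r : ℕ → V}
    (hr : ∀ n, G.d (r n) (r (n + 1)) ≤ 1) {m n : ℕ} (hmn : m ≤ n) :
    G.floydDist f v (r m) (r n) ≤
      ∑ s ∈ Finset.Ico m n, f (min (G.d v (r s)) (G.d v (r (s + 1)))) := by
  obtain ⟨L, rfl⟩ := Nat.exists_eq_add_of_le hmn
  let γ : Fin (L + 1) → V := fun i => r (m + i)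
  have hγ : G.IsPath γ := fun i => hr (m + i)
  calc G.floydDist f v (r m) (r (m + L)) = G.floydDist f v (γ 0) (γ (Fin.last L)) := by
        simp [γ]
    _ ≤ G.floydLen f v γ := G.floydDist_le_floydLen hf v hγ
    _ = _ := by
        rw [Finset.sum_Ico_eq_sum_range, Nat.add_sub_cancel_left,
          ← Fin.sum_univ_eq_sum_range]
        rfl

theorem floydDist_le_mul_sum_Ico {f : ℕ → ℝ} {K : ℝ} (hfpos : ∀ n, 0 < f n)
    (hratio : ∀ n, 1 ≤ f n / f (n + 1) ∧ f n / f (n + 1) ≤ K) (v : V) {r : ℕ → V}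
    (hr : ∀ n, G.d (r n) (r (n + 1)) ≤ 1) {m n : ℕ} (hmn : m ≤ n) :
    G.floydDist f v (r m) (r n) ≤ K * ∑ s ∈ Finset.Ico m n, f (G.d v (r s)) := by
  refine (G.floydDist_le_sum_Ico (fun n => (hfpos n).le) v hr hmn).trans ?_
  rw [Finset.mul_sum]
  refine Finset.sum_le_sum fun s _ => apply_le_mul_apply_of_le_succ hfpos hratio ?_
  have := G.d_tri v (r (s + 1)) (r s)
  have := G.d_symm (r (s + 1)) (r s)
  have := hr s
  omega

namespace IsAlphaRay

variable {G} {α : ℕ → ℝ} {r : ℕ → V}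

theorem le_alpha (hα : Monotone α) (hr : G.IsAlphaRay α r) (v : V) (s : ℕ) :
    (s : ℝ) ≤ α (G.d v (r s) + G.d v (r 0)) := by
  have hs : (s : ℝ) ≤ α (G.d (r s) (r 0)) := by simpa [Nat.dist_zero_right] using (hr.2 s 0).2
  refine hs.trans (hα ?_)
  have := G.d_tri (r s) v (r 0)
  rw [G.d_symm (r s) v] at this
  exact this

theorem exists_forall_ge_le_dist (hα : Monotone α) (hr : G.IsAlphaRay α r) (v : V) (k : ℕ) :
    ∃ N, ∀ s, N ≤ s → k ≤ G.d v (r s) := by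
  refine ⟨⌊α (k + G.d v (r 0))⌋₊ + 1, fun s hs => ?_⟩
  by_contra! h
  have hs' : α (k + G.d v (r 0)) < s :=
    (Nat.lt_floor_add_one _).trans_le (by exact_mod_cast hs)
  exact (hs'.trans_le (hr.le_alpha hα v s)).not_ge (hα (by omega))

theorem card_filter_dist_eq_le (hα : Monotone α) (hr : G.IsAlphaRay α r) (v : V)
    (t : Finset ℕ) (k : ℕ) :
    ((t.filter fun s => G.d v (r s) = k).card : ℝ) ≤ α (k + G.d v (r 0)) + 1 := by
  -- `α 0 ≥ 0` because the ray condition at `s = t = 0` reads `0 ≤ α (d (r 0) (r 0))`.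
  have hα0 : 0 ≤ α (k + G.d v (r 0)) :=
    le_trans (by simpa [G.d_self] using (hr.2 0 0).2) (hα (Nat.zero_le _))
  have hsub : {s ∈ t | G.d v (r s) = k} ⊆ Finset.range (⌊α (k + G.d v (r 0))⌋₊ + 1) := by
    intro s hs
    rw [Finset.mem_filter] at hs
    have := hr.le_alpha hα v s
    rw [hs.2] at this
    exact Finset.mem_range.2 (Nat.lt_succ_of_le (Nat.le_floor this))
  calc ((t.filter fun s => G.d v (r s) = k).card : ℝ)
      ≤ (⌊α (k + G.d v (r 0))⌋₊ + 1 : ℕ) := by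
        exact_mod_cast (Finset.card_le_card hsub).trans (Finset.card_range _).le
    _ ≤ α (k + G.d v (r 0)) + 1 := by
        push_cast
        linarith [Nat.floor_le hα0]

theorem sum_le_sum_image (hα : Monotone α) (hr : G.IsAlphaRay α r) (v : V)
    {f : ℕ → ℝ} (hf : ∀ n, 0 ≤ f n) (t : Finset ℕ) :
    ∑ s ∈ t, f (G.d v (r s)) ≤
      ∑ k ∈ t.image (fun s => G.d v (r s)), (α (k + G.d v (r 0)) + 1) * f k := by
  rw [Finset.sum_comp]
  exact Finset.sum_le_sum fun k _ => by
    rw [nsmul_eq_mul]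
    exact mul_le_mul_of_nonneg_right (hr.card_filter_dist_eq_le hα v t k) (hf k)

end IsAlphaRay

end GraphDist

theorem IsDistortion.add_add_one_le {α : ℕ → ℝ} (hα : IsDistortion α) {a k : ℕ}
    (hak : a ≤ k) :
    α (k + a) + 1 ≤ 2 * α (2 * k + 1) := by
  have h1 : α (k + a) ≤ α (2 * k + 1) := hα.2.1 (by omega)
  have h2 : ((2 * k + 1 : ℕ) : ℝ) ≤ α (2 * k + 1) := hα.2.2 _
  push_cast at h2
  linarith [(Nat.cast_nonneg k : (0 : ℝ) ≤ k)]

theorem GraphDist.IsAlphaRay.floydDist_le {V : Type} {G : GraphDist V} {v : V} {f : ℕ → ℝ}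
    {K : ℝ} (hfpos : ∀ n, 0 < f n)
    (hratio : ∀ n, 1 ≤ f n / f (n + 1) ∧ f n / f (n + 1) ≤ K)
    {α : ℕ → ℝ} (hα : IsDistortion α) {r : ℕ → V} (hr : G.IsAlphaRay α r) {m n : ℕ}
    (hmn : m ≤ n) (hfar : ∀ s, m ≤ s → G.d v (r 0) ≤ G.d v (r s)) :
    G.floydDist f v (r m) (r n) ≤
      2 * K * ∑ k ∈ (Finset.Ico m n).image (fun s => G.d v (r s)), α (2 * k + 1) * f k := by
  have hK : 0 ≤ K := zero_le_one.trans ((hratio 0).1.trans (hratio 0).2)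
  have hvisit : ∀ k ∈ (Finset.Ico m n).image (fun s => G.d v (r s)), G.d v (r 0) ≤ k := by
    simp only [Finset.mem_image, Finset.mem_Ico]
    rintro _ ⟨s, ⟨hs, -⟩, rfl⟩
    exact hfar s hs
  calc G.floydDist f v (r m) (r n) ≤ K * ∑ s ∈ Finset.Ico m n, f (G.d v (r s)) :=
        G.floydDist_le_mul_sum_Ico hfpos hratio v hr.1 hmn
    _ ≤ K * ∑ k ∈ (Finset.Ico m n).image (fun s => G.d v (r s)),
          (α (k + G.d v (r 0)) + 1) * f k :=
        mul_le_mul_of_nonneg_left (hr.sum_le_sum_image hα.2.1 v (fun n => (hfpos n).le) _) hK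
    _ ≤ K * ∑ k ∈ (Finset.Ico m n).image (fun s => G.d v (r s)), 2 * (α (2 * k + 1) * f k) :=
        mul_le_mul_of_nonneg_left (Finset.sum_le_sum fun k hk => by
          rw [← mul_assoc]
          exact mul_le_mul_of_nonneg_right (hα.add_add_one_le (hvisit k hk)) (hfpos k).le) hK
    _ = _ := by rw [← Finset.mul_sum]; ring

theorem stmt6_general {V : Type} (G : GraphDist V) (v : V)
    (f : ℕ → ℝ) (K : ℝ) (hfpos : ∀ n, 0 < f n)
    (hratio : ∀ n, 1 ≤ f n / f (n + 1) ∧ f n / f (n + 1) ≤ K)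
    (α : ℕ → ℝ) (hα : IsDistortion α)
    (hadm : Summable (fun n => α (2 * n + 1) * f n))
    (r : ℕ → V) (hr : G.IsAlphaRay α r) :
    ∀ ε : ℝ, 0 < ε → ∃ N : ℕ, ∀ m : ℕ, N ≤ m → ∀ n : ℕ, N ≤ n →
      G.floydDist f v (r m) (r n) < ε := by
  intro ε hε
  have hK : 0 < K := zero_lt_one.trans_le ((hratio 0).1.trans (hratio 0).2)
  obtain ⟨k₀, hk₀⟩ := exists_sum_lt_of_summable hadm (div_pos hε (mul_pos two_pos hK))
  set k₁ := max k₀ (G.d v (r 0))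
  obtain ⟨N, hfar⟩ := hr.exists_forall_ge_le_dist hα.2.1 v k₁
  refine ⟨N, fun m hm n hn => ?_⟩
  wlog hmn : m ≤ n generalizing m n
  · rw [G.floydDist_comm]
    exact this n hn m hm (le_of_not_ge hmn)
  have hsmall := hk₀ ((Finset.Ico m n).image (fun s => G.d v (r s))) (by
    simp only [Finset.mem_image, Finset.mem_Ico]
    rintro _ ⟨s, ⟨hs, -⟩, rfl⟩
    exact (le_max_left _ _).trans (hfar s (hm.trans hs)))
  calc G.floydDist f v (r m) (r n)
      ≤ 2 * K * ∑ k ∈ (Finset.Ico m n).image (fun s => G.d v (r s)), α (2 * k + 1) * f k :=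
      hr.floydDist_le hfpos hratio hα hmn fun s hs =>
        (le_max_right _ _).trans (hfar s (hm.trans hs))
    _ < 2 * K * (ε / (2 * K)) := mul_lt_mul_of_pos_left hsmall (mul_pos two_pos hK)
    _ = ε := by field_simp

/-- if the pair `(f, α)` is admissible (`∑ α(2n+1) f(n) < ∞`),
then every `α`-geodesic ray is Cauchy for the Floyd metric `δ_{f,v}` (hence
converges to a point of the Floyd boundary). -/
theorem stmt6 {V : Type} (G : GraphDist V) (v : V)
    (f : ℕ → ℝ) (K : ℝ) (hK : 0 < K) (hfpos : ∀ n, 0 < f n)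
    (hratio : ∀ n, 1 ≤ f n / f (n + 1) ∧ f n / f (n + 1) ≤ K)
    (α : ℕ → ℝ) (hα : IsDistortion α)
    (hadm : Summable (fun n => α (2 * n + 1) * f n))
    (r : ℕ → V) (hr : G.IsAlphaRay α r) :
    ∀ ε : ℝ, 0 < ε → ∃ N : ℕ, ∀ m : ℕ, N ≤ m → ∀ n : ℕ, N ≤ n →
      G.floydDist f v (r m) (r n) < ε :=
  stmt6_general G v f K hfpos hratio α hα hadm r hr
end

section
/- Let Γ be a locally finite connected graph with Floyd scaling function f. For every point p of the Floyd boundary ∂_f Γ and every vertex a ∈ Γ there exists a geodesic ray γ : ℕ → Γ with γ(0) = a converging to p in the Floyd metric. -/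
open Filter Topology

namespace GraphDist

variable {V : Type} (G : GraphDist V)

-- auxiliary lemmas

noncomputable def natLen (f : ℕ → ℝ) (v : V) (c : ℕ → V) (n : ℕ) : ℝ :=
  ∑ i ∈ Finset.range n, f (min (G.d v (c i)) (G.d v (c (i+1))))

def natSet (f : ℕ → ℝ) (v : V) (x y : V) : Set ℝ :=
  {L | ∃ (n : ℕ) (c : ℕ → V), (∀ i < n, G.d (c i) (c (i+1)) ≤ 1) ∧ c 0 = x ∧
    c n = y ∧ L = G.natLen f v c n}

lemma floydLen_eq_natLen (f : ℕ → ℝ) (v : V) {n : ℕ} (γ : Fin (n+1) → V) (c : ℕ → V)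
    (h : ∀ j (hj : j ≤ n), c j = γ ⟨j, Nat.lt_succ_of_le hj⟩) :
    G.floydLen f v γ = G.natLen f v c n := by
  unfold floydLen natLen
  rw [← Fin.sum_univ_eq_sum_range (fun j => f (min (G.d v (c j)) (G.d v (c (j+1))))) n]
  apply Finset.sum_congr rfl
  intro i _
  have h1 : c i.val = γ i.castSucc :=
    (h i.val i.isLt.le).trans (congrArg γ (Fin.ext (by simp)))
  have h2 : c (i.val + 1) = γ i.succ :=
    (h (i.val + 1) i.isLt).trans (congrArg γ (Fin.ext (by simp)))
  rw [h1, h2]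

lemma floydDist_eq (f : ℕ → ℝ) (v : V) (x y : V) :
    G.floydDist f v x y = sInf (G.natSet f v x y) := by
  unfold floydDist
  congr 1
  ext L
  constructor
  · rintro ⟨n, γ, hp, h0, hl, rfl⟩
    set c : ℕ → V := fun j => γ ⟨min j n, by omega⟩ with hcdef
    have hcj : ∀ j (hj : j ≤ n), c j = γ ⟨j, Nat.lt_succ_of_le hj⟩ := by
      intro j hj
      simp only [hcdef]
      congr 1
      exact Fin.ext (by simp [Nat.min_eq_left hj])
    refine ⟨n, c, ?_, ?_, ?_, G.floydLen_eq_natLen f v γ c hcj⟩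
    · intro i hi
      rw [hcj i hi.le, hcj (i+1) hi]
      exact hp ⟨i, hi⟩
    · rw [hcj 0 (Nat.zero_le n)]
      exact (congrArg γ (Fin.ext (by simp))).trans h0
    · rw [hcj n le_rfl]
      exact (congrArg γ (Fin.ext rfl)).trans hl
  · rintro ⟨n, c, hc, h0, hn, rfl⟩
    refine ⟨n, fun j : Fin (n+1) => c j.val, ?_, ?_, ?_, ?_⟩
    · intro i
      simp only [Fin.coe_castSucc, Fin.val_succ]
      exact hc i.val i.isLt
    · simpa using h0
    · simpa using hn
    · exact G.floydLen_eq_natLen f v (fun j : Fin (n+1) => c j.val) c (fun j hj => rfl) |>.symm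

lemma natSet_nonneg {f : ℕ → ℝ} (hfpos : ∀ k, 0 ≤ f k) {v x y : V} :
    ∀ L ∈ G.natSet f v x y, 0 ≤ L := by
  rintro L ⟨n, c, -, -, -, rfl⟩
  exact Finset.sum_nonneg fun i _ => hfpos _

lemma natSet_bddBelow {f : ℕ → ℝ} (hfpos : ∀ k, 0 ≤ f k) {v x y : V} :
    BddBelow (G.natSet f v x y) :=
  ⟨0, fun _ hL => G.natSet_nonneg hfpos _ hL⟩

lemma floydDist_nonneg {f : ℕ → ℝ} (hfpos : ∀ k, 0 ≤ f k) {v x y : V} :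
    0 ≤ G.floydDist f v x y := by
  rw [floydDist_eq]
  exact Real.sInf_nonneg (G.natSet_nonneg hfpos)

lemma exists_geo (x y : V) : ∃ g : ℕ → V,
    g 0 = x ∧ (∀ i, G.d (g i) (g (i+1)) ≤ 1) ∧
    (∀ i, i ≤ G.d x y → G.d x (g i) = i) ∧
    (∀ i, G.d x y ≤ i → g i = y) ∧
    (∀ s t, s ≤ t → t ≤ G.d x y → G.d (g s) (g t) = t - s) := by
  classical
  let g : ℕ → V := fun i => Nat.rec x (fun _ prev =>
    if h : 0 < G.d prev y then (G.geodesic prev y h).choose else prev) i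
  have hg0 : g 0 = x := rfl
  have hstep : ∀ i, g (i+1) =
      if h : 0 < G.d (g i) y then (G.geodesic (g i) y h).choose else g i := fun _ => rfl
  have key : ∀ i, G.d (g i) y = G.d x y - i ∧ G.d x (g i) ≤ i := by
    intro i
    induction i with
    | zero => exact ⟨by rw [hg0]; omega, by rw [hg0, G.d_self]⟩
    | succ i ih =>
      rw [hstep i]
      by_cases h : 0 < G.d (g i) y
      · rw [dif_pos h]
        obtain ⟨h1, h2⟩ := (G.geodesic (g i) y h).choose_spec
        have h3 := G.d_tri x (g i) (G.geodesic (g i) y h).choose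
        exact ⟨by omega, by omega⟩
      · rw [dif_neg h]
        have h0 : G.d (g i) y = 0 := by omega
        exact ⟨by omega, by omega⟩
  have hedge : ∀ i, G.d (g i) (g (i+1)) ≤ 1 := by
    intro i
    rw [hstep i]
    by_cases h : 0 < G.d (g i) y
    · rw [dif_pos h]
      exact (G.geodesic (g i) y h).choose_spec.1.le
    · rw [dif_neg h, G.d_self]
      omega
  have hx : ∀ i, i ≤ G.d x y → G.d x (g i) = i := by
    intro i hi
    have h1 := G.d_tri x (g i) y
    have h2 := key i
    omega
  have hend : ∀ i, G.d x y ≤ i → g i = y := by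
    intro i hi
    apply G.eq_of_d
    have := (key i).1
    omega
  have chain : ∀ s t, s ≤ t → G.d (g s) (g t) ≤ t - s := by
    intro s t h
    induction t, h using Nat.le_induction with
    | base => simp [G.d_self]
    | succ t ht ih =>
      have := G.d_tri (g s) (g t) (g (t+1))
      have := hedge t
      omega
  refine ⟨g, hg0, hedge, hx, hend, ?_⟩
  intro s t hst ht
  have h1 := chain s t hst
  have h2 := G.d_tri x (g s) y
  have h3 := G.d_tri (g s) (g t) y
  have h4 := hx s (hst.trans ht)
  have h5 := (key t).1
  omega

lemma floydDist_le_natLen {f : ℕ → ℝ} (hfpos : ∀ k, 0 ≤ f k) {v x y : V} {n : ℕ}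
    {c : ℕ → V} (hc : ∀ i < n, G.d (c i) (c (i+1)) ≤ 1) (h0 : c 0 = x) (hn : c n = y) :
    G.floydDist f v x y ≤ G.natLen f v c n := by
  rw [floydDist_eq]
  exact csInf_le (G.natSet_bddBelow hfpos) ⟨n, c, hc, h0, hn, rfl⟩

lemma floydDist_le_natLen_add {f : ℕ → ℝ} (hfpos : ∀ k, 0 ≤ f k) {v x y z : V} {n : ℕ}
    {c : ℕ → V} (hc : ∀ i < n, G.d (c i) (c (i+1)) ≤ 1) (h0 : c 0 = x) (hn : c n = y) :
    G.floydDist f v x z ≤ G.natLen f v c n + G.floydDist f v y z := by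
  rw [floydDist_eq G f v x z, floydDist_eq G f v y z]
  have hne : (G.natSet f v y z).Nonempty := by
    obtain ⟨g, hg0, hge, -, hgend, -⟩ := G.exists_geo y z
    exact ⟨_, G.d y z, g, fun i _ => hge i, hg0, hgend _ le_rfl, rfl⟩
  rw [← sub_le_iff_le_add']
  apply le_csInf hne
  rintro b ⟨m, c2, hc2, h20, h2m, rfl⟩
  rw [sub_le_iff_le_add']
  set c3 : ℕ → V := fun i => if i < n then c i else c2 (i - n) with hc3def
  have hag1 : ∀ j, j ≤ n → c3 j = c j := by
    intro j hj
    rcases lt_or_eq_of_le hj with h | h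
    · simp [hc3def, h]
    · subst h
      simp [hc3def, h20, hn]
  have hag2 : ∀ j, c3 (n + j) = c2 j := by
    intro j
    simp [hc3def]
  have hpath : ∀ i < n + m, G.d (c3 i) (c3 (i+1)) ≤ 1 := by
    intro i hi
    rcases lt_or_ge i n with h | h
    · rw [hag1 i h.le, hag1 (i+1) h]
      exact hc i h
    · obtain ⟨j, rfl⟩ := Nat.exists_eq_add_of_le h
      rw [hag2 j, show n + j + 1 = n + (j+1) by omega, hag2 (j+1)]
      exact hc2 j (by omega)
  have hlen : G.natLen f v c3 (n+m) = G.natLen f v c n + G.natLen f v c2 m := by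
    unfold natLen
    rw [Finset.sum_range_add]
    congr 1
    · apply Finset.sum_congr rfl
      intro i hi
      rw [Finset.mem_range] at hi
      rw [hag1 i hi.le, hag1 (i+1) hi]
    · apply Finset.sum_congr rfl
      intro i _
      rw [hag2 i, show n + i + 1 = n + (i+1) by omega, hag2 (i+1)]
  calc sInf (G.natSet f v x z)
      ≤ G.natLen f v c3 (n+m) := csInf_le (G.natSet_bddBelow hfpos)
        ⟨n+m, c3, hpath, by rw [hag1 0 (Nat.zero_le n), h0], by rw [hag2 m, h2m], rfl⟩
    _ = _ := hlen


end GraphDist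

/-- for every point `p` of the Floyd boundary (represented by a
sequence of vertices which is Cauchy for the Floyd metric and escapes to
infinity in the graph metric, i.e. whose limit in the Floyd completion is not a
vertex) and every vertex `a`, there is a geodesic ray starting at `a` which
converges to `p` in the Floyd metric. -/
theorem stmt7 {V : Type} (G : GraphDist V) (v : V)
    (f : ℕ → ℝ) (K : ℝ) (hK : 0 < K) (hf : IsFloydFunction f K)
    (p : ℕ → V)
    (hpCauchy : ∀ ε : ℝ, 0 < ε → ∃ N : ℕ, ∀ m : ℕ, N ≤ m → ∀ n : ℕ, N ≤ n →
      G.floydDist f v (p m) (p n) < ε)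
    (hpEsc : Tendsto (fun n => G.d v (p n)) atTop atTop)
    (a : V) :
    ∃ γ : ℕ → V, γ 0 = a ∧ (∀ s t : ℕ, G.d (γ s) (γ t) = Nat.dist s t) ∧
      Tendsto (fun n => G.floydDist f v (γ n) (p n)) atTop (nhds 0) := by
  classical
  obtain ⟨hfpos, hfrat, hfsum⟩ := hf
  have hfpos' : ∀ k, 0 ≤ f k := fun k => (hfpos k).le
  have hfanti : Antitone f := antitone_nat_of_succ_le (by
    intro n
    have h1 := (hfrat n).1
    have h2 := hfpos (n + 1)
    rw [le_div_iff₀ h2] at h1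
    linarith)
  set D := G.d a v with hDdef
  choose g hg0 hgedge hgx hgend hgpair using fun k => G.exists_geo a (p k)
  set L : ℕ → ℕ := fun k => G.d a (p k) with hLdef
  have hLtop : Tendsto L atTop atTop := by
    rw [tendsto_atTop]
    intro b
    filter_upwards [hpEsc.eventually_ge_atTop (b + G.d v a)] with k hk
    have := G.d_tri v a (p k)
    simp only [hLdef]
    omega
  set σ : ℕ → ℕ → V := fun k n => g k (min n (L k)) with hσdef
  have hσball : ∀ k n, G.d a (σ k n) ≤ n := by
    intro k n
    simp only [hσdef]
    rw [hgx k _ (min_le_right _ _)]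
    exact min_le_left _ _
  set U : Ultrafilter ℕ := Ultrafilter.of atTop with hUdef
  have hU : (U : Filter ℕ) ≤ atTop := Ultrafilter.of_le _
  have hA : ∀ n : ℕ, ∃ x : V, {k | σ k n = x} ∈ U := by
    intro n
    have hmem : {y | G.d a y ≤ n} ∈ U.map (fun k => σ k n) :=
      Filter.mem_map.2 (Filter.univ_mem' (fun k => hσball k n))
    obtain ⟨x, -, hx⟩ := Ultrafilter.eq_pure_of_finite_mem (G.locallyFinite a n) hmem
    refine ⟨x, ?_⟩
    have hs : {x} ∈ U.map (fun k => σ k n) := by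
      rw [hx]
      exact Ultrafilter.mem_pure.2 rfl
    exact Filter.mem_map.1 hs
  choose γ hγ using hA
  have pick : ∀ S : Set ℕ, S ∈ U → ∃ k, k ∈ S := fun S hS => Filter.nonempty_of_mem hS
  have hLk : ∀ n : ℕ, {k | n ≤ L k} ∈ U := fun n => hU (hLtop.eventually_ge_atTop n)
  have hγ0 : γ 0 = a := by
    obtain ⟨k, hk⟩ := pick _ (hγ 0)
    have hk' : σ k 0 = γ 0 := hk
    rw [← hk']
    simp only [hσdef]
    rw [Nat.zero_min, hg0 k]
  have haux : ∀ s t : ℕ, s ≤ t → G.d (γ s) (γ t) = t - s := by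
    intro s t hst
    obtain ⟨k, hk⟩ := pick _ (inter_mem (inter_mem (hγ s) (hγ t)) (hLk t))
    obtain ⟨⟨hks, hkt⟩, hkL⟩ := hk
    have hs : γ s = g k s := by
      rw [← hks]; simp only [hσdef]; rw [Nat.min_eq_left (hst.trans hkL)]
    have ht : γ t = g k t := by
      rw [← hkt]; simp only [hσdef]; rw [Nat.min_eq_left hkL]
    rw [hs, ht]
    exact hgpair k s t hst hkL
  have hgeod : ∀ s t : ℕ, G.d (γ s) (γ t) = Nat.dist s t := by
    intro s t
    rcases le_total s t with h | h
    · rw [haux s t h, Nat.dist_eq_sub_of_le h]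
    · rw [G.d_symm, haux t s h, Nat.dist_comm, Nat.dist_eq_sub_of_le h]
  refine ⟨γ, hγ0, hgeod, ?_⟩
  rw [Metric.tendsto_atTop]
  intro ε hε
  obtain ⟨N1, hN1⟩ := hpCauchy (ε / 2) (by linarith)
  have htail : Tendsto (fun m => ∑' i, f (i + m)) atTop (nhds 0) := tendsto_sum_nat_add f
  obtain ⟨N2, hN2⟩ := Metric.tendsto_atTop.1 htail (ε / 2) (by linarith)
  refine ⟨max N1 (N2 + D), ?_⟩
  intro n hn
  have hnN1 : N1 ≤ n := le_trans (le_max_left _ _) hn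
  have hnD : N2 + D ≤ n := le_trans (le_max_right _ _) hn
  obtain ⟨k, hk⟩ := pick _ (inter_mem (inter_mem (hγ n) (hLk n)) (hU (Ici_mem_atTop N1)))
  obtain ⟨⟨hkn, hkL⟩, hkN1⟩ := hk
  have hkL' : n ≤ L k := hkL
  have hγn : γ n = g k n := by
    rw [← hkn]; simp only [hσdef]; rw [Nat.min_eq_left hkL']
  set M := L k - n with hM
  set c : ℕ → V := fun i => g k (min (n + i) (L k)) with hcdef
  have hc0 : c 0 = γ n := by
    simp only [hcdef]
    rw [Nat.add_zero, Nat.min_eq_left hkL', hγn]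
  have hcM : c M = p k := by
    have h1 : min (n + M) (L k) = L k := by omega
    simp only [hcdef]
    rw [h1]
    exact hgend k (L k) le_rfl
  have hcpath : ∀ i < M, G.d (c i) (c (i + 1)) ≤ 1 := by
    intro i hi
    have h1 : min (n + i) (L k) = n + i := by omega
    have h2 : min (n + (i + 1)) (L k) = n + i + 1 := by omega
    simp only [hcdef]
    rw [h1, h2]
    exact hgedge k (n + i)
  have hlenb : G.natLen f v c M ≤ ∑' i, f (i + (n - D)) := by
    have hterm : ∀ i ∈ Finset.range M,
        f (min (G.d v (c i)) (G.d v (c (i + 1)))) ≤ f (i + (n - D)) := by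
      intro i hi
      rw [Finset.mem_range] at hi
      have hLkdef : G.d a (p k) = L k := by rw [hLdef]
      refine hfanti ?_
      have h1 : min (n + i) (L k) = n + i := by omega
      have h2 : min (n + (i + 1)) (L k) = n + (i + 1) := by omega
      have e1 : G.d a (c i) = n + i := by
        simp only [hcdef]; rw [h1]; exact hgx k _ (by omega)
      have e2 : G.d a (c (i + 1)) = n + (i + 1) := by
        simp only [hcdef]; rw [h2]; exact hgx k _ (by omega)
      have t1 := G.d_tri a v (c i)
      have t2 := G.d_tri a v (c (i + 1))
      rw [le_min_iff]
      constructor <;> omega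
    calc G.natLen f v c M ≤ ∑ i ∈ Finset.range M, f (i + (n - D)) :=
          Finset.sum_le_sum hterm
      _ ≤ ∑' i, f (i + (n - D)) :=
          Summable.sum_le_tsum _ (fun i _ => hfpos' _) ((summable_nat_add_iff (n - D)).2 hfsum)
  have htailb : ∑' i, f (i + (n - D)) < ε / 2 := by
    have h := hN2 (n - D) (by omega)
    rw [Real.dist_eq, sub_zero] at h
    exact lt_of_abs_lt h
  have hmain : G.floydDist f v (γ n) (p n) ≤ G.natLen f v c M + G.floydDist f v (p k) (p n) :=
    G.floydDist_le_natLen_add hfpos' hcpath hc0 hcM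
  have hC := hN1 k hkN1 n hnN1
  have hnonneg : 0 ≤ G.floydDist f v (γ n) (p n) := G.floydDist_nonneg hfpos'
  rw [Real.dist_eq, sub_zero, abs_of_nonneg hnonneg]
  linarith
end

section
/- Let Γ₁, Γ₂ be locally finite connected graphs with Floyd scaling functions f₁, f₂, let α be a distortion function, and let φ : Γ₁ → Γ₂ be α-isometric. If f₂(n) ≤ D · f₁(α(n)) for all n and some D > 0, then φ is Lipschitz for the Floyd metrics and extends to a Lipschitz map between the Floyd completions. -/
open Filter Topology

section Aux

lemma floyd_anti {f : ℕ → ℝ} {K : ℝ} (hf : IsFloydFunction f K) :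
    ∀ {a b : ℕ}, a ≤ b → f b ≤ f a := by
  have h : ∀ n, f (n + 1) ≤ f n := by
    intro n
    have := (hf.2.1 n).1
    have hp := hf.1 (n + 1)
    rwa [one_le_div hp] at this
  intro a b hab
  exact antitone_nat_of_succ_le h hab

lemma floyd_K_one {f : ℕ → ℝ} {K : ℝ} (hf : IsFloydFunction f K) : 1 ≤ K :=
  le_trans (hf.2.1 0).1 (hf.2.1 0).2

lemma floyd_pow {f : ℕ → ℝ} {K : ℝ} (hf : IsFloydFunction f K) (k n : ℕ) :
    f n ≤ K ^ k * f (n + k) := by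
  have hK1 : (1:ℝ) ≤ K := floyd_K_one hf
  have hK0 : (0:ℝ) ≤ K := le_trans zero_le_one hK1
  induction k with
  | zero => simp
  | succ k ih =>
      have hstep : f (n + k) ≤ K * f (n + k + 1) := by
        have := (hf.2.1 (n + k)).2
        have hp := hf.1 (n + k + 1)
        rwa [div_le_iff₀ hp] at this
      calc f n ≤ K ^ k * f (n + k) := ih
        _ ≤ K ^ k * (K * f (n + k + 1)) := by
            exact mul_le_mul_of_nonneg_left hstep (pow_nonneg hK0 k)
        _ = K ^ (k + 1) * f (n + (k + 1)) := by ring_nf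
        _ = K ^ (k + 1) * f (n + k + 1) := by rfl

lemma floyd_jump {f : ℕ → ℝ} {K : ℝ} (hf : IsFloydFunction f K) {w q k : ℕ}
    (h : q ≤ w + k) : f w ≤ K ^ k * f q := by
  have hK0 : (0:ℝ) ≤ K := le_trans zero_le_one (floyd_K_one hf)
  calc f w ≤ K ^ k * f (w + k) := floyd_pow hf k w
    _ ≤ K ^ k * f q :=
      mul_le_mul_of_nonneg_left (floyd_anti hf h) (pow_nonneg hK0 k)

/-- geodesic path existence -/
lemma geo_path {V : Type} (G : GraphDist V) (a b : V) :
    ∃ γ : Fin (G.d a b + 1) → V, G.IsPath γ ∧ γ 0 = a ∧ γ (Fin.last _) = b ∧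
      ∀ i, G.d a (γ i) ≤ G.d a b := by
  suffices h : ∀ N a b, G.d a b = N → ∃ γ : Fin (N + 1) → V, G.IsPath γ ∧ γ 0 = a ∧
      γ (Fin.last N) = b ∧ ∀ i, G.d a (γ i) ≤ N by
    obtain ⟨γ, h1, h2, h3, h4⟩ := h (G.d a b) a b rfl
    exact ⟨γ, h1, h2, h3, h4⟩
  intro N
  induction N with
  | zero =>
      intro a b hab
      have : a = b := G.eq_of_d a b hab
      subst this
      refine ⟨fun _ => a, ?_, rfl, rfl, ?_⟩
      · intro i; exact absurd i.2 (by omega)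
      · intro i; simp [G.d_self]
  | succ N ih =>
      intro a b hab
      obtain ⟨z, hz1, hz2⟩ := G.geodesic a b (by omega)
      obtain ⟨γ', h1, h2, h3, h4⟩ := ih z b (by omega)
      refine ⟨Fin.cons a γ', ?_, rfl, ?_, ?_⟩
      · intro i
        refine Fin.cases ?_ ?_ i
        · simpa [h2] using le_of_eq hz1
        · intro j
          have hcs : (Fin.succ j).castSucc = (j.castSucc).succ := by
            ext; simp
          rw [hcs, Fin.cons_succ, Fin.cons_succ]
          exact h1 j
      · have hl : Fin.last (N + 1) = (Fin.last N).succ := rfl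
        rw [hl, Fin.cons_succ, h3]
      · intro i
        refine Fin.cases ?_ ?_ i
        · simp [G.d_self]
        · intro j
          rw [Fin.cons_succ]
          calc G.d a (γ' j) ≤ G.d a z + G.d z (γ' j) := G.d_tri _ _ _
            _ ≤ 1 + N := by have := h4 j; omega
            _ = N + 1 := by omega

end Aux

section Concat

lemma concat_path {V : Type} (G : GraphDist V) (f : ℕ → ℝ) (v : V) {m n : ℕ}
    (γ : Fin (m + 1) → V) (δ : Fin (n + 1) → V)
    (hγ : G.IsPath γ) (hδ : G.IsPath δ) (hjoin : γ (Fin.last m) = δ 0) :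
    ∃ η : Fin (m + n + 1) → V, G.IsPath η ∧ η 0 = γ 0 ∧
      η (Fin.last (m + n)) = δ (Fin.last n) ∧
      G.floydLen f v η = G.floydLen f v γ + G.floydLen f v δ := by
  set c : ℕ → V := fun k =>
    if h : k ≤ m then γ ⟨k, by omega⟩ else δ ⟨min (k - m) n, by omega⟩ with hc
  have c_left : ∀ (k : ℕ) (h : k ≤ m), c k = γ ⟨k, by omega⟩ := by
    intro k h; simp [hc, h]
  have c_right : ∀ (k : ℕ) (h1 : m ≤ k) (h2 : k ≤ m + n),
      c k = δ ⟨k - m, by omega⟩ := by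
    intro k h1 h2
    rcases eq_or_lt_of_le h1 with h | h
    · rw [c_left k (by omega)]
      have e : (⟨k, by omega⟩ : Fin (m + 1)) = Fin.last m := by
        ext; simp [← h]
      rw [e, hjoin]
      congr 1
      ext; simp; omega
    · have hnk : ¬ k ≤ m := by omega
      simp only [hc, dif_neg hnk]
      congr 1
      ext
      simp; omega
  refine ⟨fun i => c i.val, ?_, ?_, ?_, ?_⟩
  · intro i
    by_cases h : (i : ℕ) + 1 ≤ m
    · show G.d (c i.val) (c (i.val + 1)) ≤ 1
      rw [c_left i.val (by omega), c_left (i.val + 1) h]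
      exact hγ ⟨i.val, by omega⟩
    · have h1 : m ≤ (i : ℕ) := by omega
      show G.d (c i.val) (c (i.val + 1)) ≤ 1
      rw [c_right i.val h1 (by omega), c_right (i.val + 1) (by omega) (by omega)]
      have hlt : (i : ℕ) - m < n := by omega
      have := hδ ⟨(i : ℕ) - m, hlt⟩
      have e1 : (⟨(i:ℕ) - m, hlt⟩ : Fin n).castSucc = ⟨(i:ℕ) - m, by omega⟩ := rfl
      have e2 : (⟨(i:ℕ) - m, hlt⟩ : Fin n).succ = ⟨(i:ℕ) + 1 - m, by omega⟩ := by
        ext; simp; omega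
      rwa [e1, e2] at this
  · show c 0 = γ 0
    rw [c_left 0 (by omega)]
    congr 1
  · show c (m + n) = δ (Fin.last n)
    rw [c_right (m + n) (by omega) le_rfl]
    congr 1
    ext; simp
  · show (∑ i : Fin (m + n), f (min (G.d v (c i.val)) (G.d v (c (i.val + 1)))))
      = G.floydLen f v γ + G.floydLen f v δ
    rw [Fin.sum_univ_add]
    congr 1
    · apply Finset.sum_congr rfl
      intro i _
      have hv : ((Fin.castAdd n i : Fin (m+n)) : ℕ) = (i : ℕ) := rfl
      have hi := i.isLt
      rw [hv, c_left _ (by omega), c_left _ (by omega)]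
      rfl
    · apply Finset.sum_congr rfl
      intro i _
      have hv : ((Fin.natAdd m i : Fin (m+n)) : ℕ) = m + i := rfl
      rw [hv, c_right (m + i) (by omega) (by omega),
        c_right (m + i + 1) (by omega) (by omega)]
      have e1 : (⟨m + i - m, by omega⟩ : Fin (n+1)) = i.castSucc := by
        ext; simp
      have e2 : (⟨m + i + 1 - m, by omega⟩ : Fin (n+1)) = i.succ := by
        ext; simp; omega
      rw [e1, e2]

end Concat


/-- an `α`-isometric map `φ : Γ₁ → Γ₂` between locally finite
connected graphs, where `α : ℕ → ℕ` is a distortion function and the Floyd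
scaling functions satisfy `f₂ n ≤ D * f₁ (α n)`, is Lipschitz for the Floyd
metrics (hence extends to a Lipschitz map between the Floyd completions). -/
theorem stmt10 {V₁ V₂ : Type} (G₁ : GraphDist V₁) (G₂ : GraphDist V₂)
    (v₁ : V₁) (v₂ : V₂)
    (f₁ f₂ : ℕ → ℝ) (K₁ K₂ : ℝ) (hK₁ : 0 < K₁) (hK₂ : 0 < K₂)
    (hf₁ : IsFloydFunction f₁ K₁) (hf₂ : IsFloydFunction f₂ K₂)
    (α : ℕ → ℕ) (hαmono : Monotone α) (hαge : ∀ n : ℕ, n ≤ α n)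
    (φ : V₁ → V₂)
    (hφ : ∀ x y : V₁,
      G₂.d (φ x) (φ y) ≤ α (G₁.d x y) ∧ G₁.d x y ≤ α (G₂.d (φ x) (φ y)))
    (D : ℝ) (hD : 0 < D) (hcmp : ∀ n : ℕ, f₂ n ≤ D * f₁ (α n)) :
    ∃ C : ℝ, 0 < C ∧ ∀ x y : V₁,
      G₂.floydDist f₂ v₂ (φ x) (φ y) ≤ C * G₁.floydDist f₁ v₁ x y := by
  classical
  have hK2_1 : (1:ℝ) ≤ K₂ := floyd_K_one hf₂
  set m := α 1 with hm
  have hm1 : 1 ≤ m := hαge 1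
  set e := G₂.d (φ v₁) v₂ with he
  set C₀ : ℝ := (m : ℝ) * (K₂ ^ (e + m) * D) with hC0
  have hpowpos : (0:ℝ) < K₂ ^ (e + m) := pow_pos hK₂ _
  have hC0pos : 0 < C₀ := by
    apply mul_pos
    · exact_mod_cast Nat.lt_of_lt_of_le Nat.zero_lt_one hm1
    · exact mul_pos hpowpos hD
  have hlen2nonneg : ∀ {n : ℕ} (γ : Fin (n+1) → V₂), 0 ≤ G₂.floydLen f₂ v₂ γ := by
    intro n γ
    exact Finset.sum_nonneg fun i _ => (hf₂.1 _).le
  -- Edge lemma: each edge of Γ₁ maps to a short path in Γ₂ of comparable Floyd length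
  have edge : ∀ a b : V₁, G₁.d a b ≤ 1 →
      ∃ (N : ℕ) (η : Fin (N+1) → V₂), G₂.IsPath η ∧ η 0 = φ a ∧
        η (Fin.last N) = φ b ∧
        G₂.floydLen f₂ v₂ η ≤ C₀ * f₁ (min (G₁.d v₁ a) (G₁.d v₁ b)) := by
    intro a b hab
    set N := G₂.d (φ a) (φ b) with hN
    obtain ⟨η, hp, h0, hl, hnear⟩ := geo_path G₂ (φ a) (φ b)
    have hNm : N ≤ m := le_trans (hφ a b).1 (hαmono hab)
    refine ⟨N, η, hp, h0, hl, ?_⟩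
    set q := G₂.d (φ v₁) (φ a) with hq
    set B : ℝ := K₂ ^ (e + m) * (D * f₁ (min (G₁.d v₁ a) (G₁.d v₁ b))) with hB
    have key : ∀ j : Fin (N+1), q ≤ G₂.d v₂ (η j) + (e + m) := by
      intro j
      have t2 : G₂.d (φ v₁) (φ a) ≤ G₂.d (φ v₁) (η j) + G₂.d (η j) (φ a) :=
        G₂.d_tri _ _ _
      have t1 : G₂.d (φ v₁) (η j) ≤ G₂.d (φ v₁) v₂ + G₂.d v₂ (η j) :=
        G₂.d_tri _ _ _
      have t3 : G₂.d (η j) (φ a) ≤ N := by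
        rw [G₂.d_symm]; exact hnear j
      omega
    have hterm : ∀ i : Fin N,
        f₂ (min (G₂.d v₂ (η i.castSucc)) (G₂.d v₂ (η i.succ))) ≤ B := by
      intro i
      have k1 := key i.castSucc
      have k2 := key i.succ
      have hqw : q ≤ min (G₂.d v₂ (η i.castSucc)) (G₂.d v₂ (η i.succ)) + (e + m) := by
        omega
      have hmab : min (G₁.d v₁ a) (G₁.d v₁ b) ≤ α q :=
        le_trans (min_le_left _ _) (hφ v₁ a).2
      calc f₂ (min (G₂.d v₂ (η i.castSucc)) (G₂.d v₂ (η i.succ)))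
          ≤ K₂ ^ (e + m) * f₂ q := floyd_jump hf₂ hqw
        _ ≤ K₂ ^ (e + m) * (D * f₁ (α q)) :=
            mul_le_mul_of_nonneg_left (hcmp q) hpowpos.le
        _ ≤ B := by
            refine mul_le_mul_of_nonneg_left ?_ hpowpos.le
            exact mul_le_mul_of_nonneg_left (floyd_anti hf₁ hmab) hD.le
    have hBnn : 0 ≤ B := by
      have := hf₁.1 (min (G₁.d v₁ a) (G₁.d v₁ b))
      positivity
    calc G₂.floydLen f₂ v₂ η ≤ ∑ _i : Fin N, B :=
          Finset.sum_le_sum fun i _ => hterm i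
      _ = (N : ℝ) * B := by
          rw [Finset.sum_const, Finset.card_univ, Fintype.card_fin, nsmul_eq_mul]
      _ ≤ (m : ℝ) * B := by
          apply mul_le_mul_of_nonneg_right _ hBnn
          exact_mod_cast hNm
      _ = C₀ * f₁ (min (G₁.d v₁ a) (G₁.d v₁ b)) := by rw [hC0, hB]; ring
  -- Main induction: any path in Γ₁ maps to a path in Γ₂ of comparable Floyd length
  have main : ∀ (n : ℕ) (γ : Fin (n+1) → V₁), G₁.IsPath γ →
      ∃ (N : ℕ) (η : Fin (N+1) → V₂), G₂.IsPath η ∧ η 0 = φ (γ 0) ∧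
        η (Fin.last N) = φ (γ (Fin.last n)) ∧
        G₂.floydLen f₂ v₂ η ≤ C₀ * G₁.floydLen f₁ v₁ γ := by
    intro n
    induction n with
    | zero =>
        intro γ hγ
        refine ⟨0, fun _ => φ (γ 0), ?_, rfl, rfl, ?_⟩
        · intro i; exact absurd i.2 (by omega)
        · have h1 : G₂.floydLen f₂ v₂ (fun _ : Fin 1 => φ (γ 0)) = 0 := by
            simp [GraphDist.floydLen]
          have h2 : G₁.floydLen f₁ v₁ γ = 0 := by
            simp [GraphDist.floydLen]
          rw [h1, h2, mul_zero]
    | succ n ih =>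
        intro γ hγ
        set γ' : Fin (n+1) → V₁ := fun i => γ i.castSucc with hγ'
        have hγ'path : G₁.IsPath γ' := by
          intro i
          show G₁.d (γ (i.castSucc).castSucc) (γ (i.succ).castSucc) ≤ 1
          rw [← Fin.succ_castSucc]
          exact hγ i.castSucc
        obtain ⟨N₁, η₁, hp1, h01, hl1, hlen1⟩ := ih γ' hγ'path
        have hedge : G₁.d (γ (Fin.last n).castSucc) (γ (Fin.last (n+1))) ≤ 1 := by
          have hls : (Fin.last n).succ = Fin.last (n+1) := rfl
          have := hγ (Fin.last n)
          rwa [hls] at this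
        obtain ⟨N₂, η₂, hp2, h02, hl2, hlen2⟩ :=
          edge (γ (Fin.last n).castSucc) (γ (Fin.last (n+1))) hedge
        have hjoin : η₁ (Fin.last N₁) = η₂ 0 := by
          rw [hl1, h02]
        obtain ⟨η, hp, h0, hl, hlen⟩ := concat_path G₂ f₂ v₂ η₁ η₂ hp1 hp2 hjoin
        refine ⟨N₁ + N₂, η, hp, ?_, ?_, ?_⟩
        · rw [h0, h01, hγ']
          simp
        · rw [hl, hl2]
        · have hsplit : G₁.floydLen f₁ v₁ γ = G₁.floydLen f₁ v₁ γ' +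
              f₁ (min (G₁.d v₁ (γ (Fin.last n).castSucc))
                (G₁.d v₁ (γ (Fin.last (n+1))))) := by
            show (∑ i : Fin (n+1), f₁ (min (G₁.d v₁ (γ i.castSucc)) (G₁.d v₁ (γ i.succ)))) = _
            rw [Fin.sum_univ_castSucc]
            congr 1
          rw [hlen, hsplit, mul_add]
          have hf1nn : 0 ≤ f₁ (min (G₁.d v₁ (γ (Fin.last n).castSucc))
              (G₁.d v₁ (γ (Fin.last (n+1))))) := (hf₁.1 _).le
          linarith
  -- Assembly
  refine ⟨C₀, hC0pos, ?_⟩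
  intro x y
  obtain ⟨γ₀, hp₀, h00, hl0, _⟩ := geo_path G₁ x y
  set S₁ : Set ℝ := {L | ∃ (n : ℕ) (γ : Fin (n + 1) → V₁), G₁.IsPath γ ∧ γ 0 = x ∧
    γ (Fin.last n) = y ∧ L = G₁.floydLen f₁ v₁ γ} with hS₁
  have hne : S₁.Nonempty := ⟨G₁.floydLen f₁ v₁ γ₀, G₁.d x y, γ₀, hp₀, h00, hl0, rfl⟩
  have hbdd2 : BddBelow {L | ∃ (n : ℕ) (γ : Fin (n + 1) → V₂), G₂.IsPath γ ∧
      γ 0 = φ x ∧ γ (Fin.last n) = φ y ∧ L = G₂.floydLen f₂ v₂ γ} := by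
    refine ⟨0, ?_⟩
    rintro L ⟨n, γ, -, -, -, rfl⟩
    exact hlen2nonneg γ
  have key : G₂.floydDist f₂ v₂ (φ x) (φ y) / C₀ ≤ sInf S₁ := by
    apply le_csInf hne
    rintro L ⟨n, γ, hpγ, h0γ, hlγ, rfl⟩
    obtain ⟨N, η, hp', h0', hl', hlenη⟩ := main n γ hpγ
    have hdle : G₂.floydDist f₂ v₂ (φ x) (φ y) ≤ G₂.floydLen f₂ v₂ η := by
      apply csInf_le hbdd2
      exact ⟨N, η, hp', by rw [h0', h0γ], by rw [hl', hlγ], rfl⟩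
    rw [div_le_iff₀ hC0pos]
    calc G₂.floydDist f₂ v₂ (φ x) (φ y) ≤ G₂.floydLen f₂ v₂ η := hdle
      _ ≤ C₀ * G₁.floydLen f₁ v₁ γ := hlenη
      _ = G₁.floydLen f₁ v₁ γ * C₀ := mul_comm _ _
  have hfd : G₁.floydDist f₁ v₁ x y = sInf S₁ := rfl
  rw [hfd]
  rw [div_le_iff₀ hC0pos] at key
  calc G₂.floydDist f₂ v₂ (φ x) (φ y) ≤ sInf S₁ * C₀ := key
    _ = C₀ * sInf S₁ := mul_comm _ _
end

section
/- Let G be a group acting by homeomorphisms on compact Hausdorff spaces X and Y, and let ψ : X → Y be a G-equivariant continuous surjection. If the action of G on the space of unordered triples of distinct points of X is properly discontinuous (i.e. the action on X is 3-discontinuous), then the action of G on Y is also 3-discontinuous. -/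
open Filter Topology

/-- The set of ordered triples of pairwise distinct points of `T`
(a model for the space `Θ³T` of distinct triples). -/
def distinctTriples (T : Type) : Set (T × T × T) :=
  {x | x.1 ≠ x.2.1 ∧ x.1 ≠ x.2.2 ∧ x.2.1 ≠ x.2.2}

/-- Diagonal action of a group element on triples. -/
def tripleSmul {G T : Type} [Group G] [MulAction G T] (g : G) (x : T × T × T) :
    T × T × T :=
  (g • x.1, g • x.2.1, g • x.2.2)

/-- The action of `G` on `T` is 3-discontinuous (convergence property): the
induced action on the space of distinct triples is properly discontinuous. -/
def ThreeDiscontinuous (G T : Type) [Group G] [MulAction G T]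
    [TopologicalSpace T] : Prop :=
  ∀ K L : Set (T × T × T), K ⊆ distinctTriples T → L ⊆ distinctTriples T →
    IsCompact K → IsCompact L →
    {g : G | (tripleSmul g '' K ∩ L).Nonempty}.Finite

/-- The action of `G` on `T` is 3-cocompact: `Θ³T / G` is compact, i.e. there is
a compact fundamental set for the action on distinct triples. -/
def ThreeCocompact (G T : Type) [Group G] [MulAction G T]
    [TopologicalSpace T] : Prop :=
  ∃ K : Set (T × T × T), K ⊆ distinctTriples T ∧ IsCompact K ∧
    ∀ x ∈ distinctTriples T, ∃ g : G, tripleSmul g x ∈ K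

/-- The action of `G` on `T` is 2-cocompact: there is a compact fundamental set
for the action on pairs of distinct points. -/
def TwoCocompact (G T : Type) [Group G] [MulAction G T]
    [TopologicalSpace T] : Prop :=
  ∃ K : Set (T × T), K ⊆ {x | x.1 ≠ x.2} ∧ IsCompact K ∧
    ∀ x : T × T, x.1 ≠ x.2 → ∃ g : G, (g • x.1, g • x.2) ∈ K

/-- `x` is a conical (limit) point for the action of `G` on `T`: there are an
injective sequence `gₙ` in `G` and distinct points `a ≠ b` with `gₙ • y → a`
for every `y ≠ x` and `gₙ • x → b`. -/
def IsConical (G : Type) {T : Type} [Group G] [MulAction G T]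
    [TopologicalSpace T] (x : T) : Prop :=
  ∃ (g : ℕ → G) (a b : T), Function.Injective g ∧ a ≠ b ∧
    (∀ y : T, y ≠ x → Tendsto (fun n => g n • y) atTop (nhds a)) ∧
    Tendsto (fun n => g n • x) atTop (nhds b)

/-- `x` is a limit point of the subgroup `H` acting on `T`: some orbit
accumulates at `x` along an injective sequence in `H`. -/
def IsLimitPointOf {G T : Type} [Group G] [MulAction G T] [TopologicalSpace T]
    (H : Subgroup G) (x : T) : Prop :=
  ∃ u : ℕ → H, Function.Injective u ∧
    ∃ t : T, Tendsto (fun n => (u n : G) • t) atTop (nhds x)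

/-- `p` is a parabolic point: the limit set of its stabilizer is exactly `{p}`. -/
def IsParabolicPt (G : Type) {T : Type} [Group G] [MulAction G T]
    [TopologicalSpace T] (p : T) : Prop :=
  {x : T | IsLimitPointOf (MulAction.stabilizer G p) x} = {p}

section TripleMap

variable {G X Y : Type} [Group G] [MulAction G X] [MulAction G Y]

theorem preimage_prodMap_distinctTriples_subset (ψ : X → Y) {S : Set (Y × Y × Y)}
    (hS : S ⊆ distinctTriples Y) :
    Prod.map ψ (Prod.map ψ ψ) ⁻¹' S ⊆ distinctTriples X := by
  intro x hx
  obtain ⟨h12, h13, h23⟩ := hS hx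
  exact ⟨fun h => h12 (congrArg ψ h), fun h => h13 (congrArg ψ h),
    fun h => h23 (congrArg ψ h)⟩

theorem prodMap_tripleSmul {ψ : X → Y} (hψe : ∀ (g : G) (x : X), ψ (g • x) = g • ψ x)
    (g : G) (x : X × X × X) :
    Prod.map ψ (Prod.map ψ ψ) (tripleSmul g x) = tripleSmul g (Prod.map ψ (Prod.map ψ ψ) x) := by
  simp only [tripleSmul, Prod.map, hψe]

theorem setOf_tripleSmul_inter_nonempty_subset_preimage {ψ : X → Y}
    (hψs : Function.Surjective ψ) (hψe : ∀ (g : G) (x : X), ψ (g • x) = g • ψ x)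
    (K L : Set (Y × Y × Y)) :
    {g : G | (tripleSmul g '' K ∩ L).Nonempty} ⊆
      {g : G | (tripleSmul g '' (Prod.map ψ (Prod.map ψ ψ) ⁻¹' K) ∩
        Prod.map ψ (Prod.map ψ ψ) ⁻¹' L).Nonempty} := by
  rintro g ⟨-, ⟨k, hkK, rfl⟩, hgkL⟩
  obtain ⟨x, rfl⟩ := hψs.prodMap (hψs.prodMap hψs) k
  exact ⟨tripleSmul g x, ⟨x, hkK, rfl⟩, by rwa [Set.mem_preimage, prodMap_tripleSmul hψe]⟩

end TripleMap

theorem stmt12_general {G X Y : Type} [Group G]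
    [TopologicalSpace X] [CompactSpace X] [MulAction G X]
    [TopologicalSpace Y] [T2Space Y] [MulAction G Y]
    (ψ : X → Y) (hψc : Continuous ψ) (hψs : Function.Surjective ψ)
    (hψe : ∀ (g : G) (x : X), ψ (g • x) = g • ψ x)
    (h3 : ThreeDiscontinuous G X) :
    ThreeDiscontinuous G Y := by
  intro K L hK hL hKc hLc
  have hFc : Continuous (Prod.map ψ (Prod.map ψ ψ)) := hψc.prodMap (hψc.prodMap hψc)
  exact (h3 _ _ (preimage_prodMap_distinctTriples_subset ψ hK)
    (preimage_prodMap_distinctTriples_subset ψ hL)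
    (hKc.preimage_continuous hFc) (hLc.preimage_continuous hFc)).subset
    (setOf_tripleSmul_inter_nonempty_subset_preimage hψs hψe K L)

/-- if `G` acts 3-discontinuously on a compactum `X` and
`ψ : X → Y` is a `G`-equivariant continuous surjection onto a compactum `Y`
(both with more than two points), then the action of `G` on `Y` is
3-discontinuous. -/
theorem stmt12 {G X Y : Type} [Group G]
    [TopologicalSpace X] [CompactSpace X] [T2Space X] [MulAction G X]
    [TopologicalSpace Y] [CompactSpace Y] [T2Space Y] [MulAction G Y]
    (hXcont : ∀ g : G, Continuous (fun x : X => g • x))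
    (hYcont : ∀ g : G, Continuous (fun y : Y => g • y))
    (hX3 : ∃ x : X × X × X, x ∈ distinctTriples X)
    (hY3 : ∃ y : Y × Y × Y, y ∈ distinctTriples Y)
    (ψ : X → Y) (hψc : Continuous ψ) (hψs : Function.Surjective ψ)
    (hψe : ∀ (g : G) (x : X), ψ (g • x) = g • ψ x)
    (h3 : ThreeDiscontinuous G X) :
    ThreeDiscontinuous G Y :=
  stmt12_general ψ hψc hψs hψe h3
end

section
/- Let G be a finitely generated group acting 3-discontinuously and 3-cocompactly on a compactum T without isolated points. Then every point of T is a conical limit point. In particular the action has no parabolic points. -/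
/-!
As `G` is countable, every point `u` is the countable intersection of the open sets
`{v | g • (u, v, c) ∉ K}` (with `c ≠ u` and `K` a compact fundamental set for distinct triples)
minus `c`, so the compactum is first countable. Given `x`, take `y n → x` avoiding `x` and a fixed
`w ≠ x`, and `g n` carrying `(x, y n, w)` into `K`. No `g` occurs infinitely often, since otherwise
`g • (x, x, w) ∈ K`; so along a subsequence the `g n` are distinct and
`g n • (x, y n, w) → (b, a₁, a₂)` with distinct entries. Proper discontinuity now forces
`g n • z → a₂` for every `z ≠ x`: a limit `c ∉ {b, a₂}` of `g n • z` would send the fixed triple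
`(x, z, w)` to the distinct triple `(b, c, a₂)`, and `c = b` would send the triples
`(z, y n, w) → (z, x, w)` to `(b, a₁, a₂)`.
-/

open Filter Topology

open Function Set

theorem Group.FG.countable (G : Type*) [Group G] [Group.FG G] : Countable G := by
  obtain ⟨α, _, φ, hφ⟩ := Group.fg_iff_exists_freeGroup_hom_surjective_finite.1 ‹Group.FG G›
  exact hφ.countable

theorem IsGδ.isCountablyGenerated_nhds {X : Type*} [TopologicalSpace X] [CompactSpace X]
    [RegularSpace X] {x : X} (hx : IsGδ {x}) : (𝓝 x).IsCountablyGenerated := by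
  obtain ⟨U, hUo, hU⟩ := isGδ_iff_eq_iInter_nat.1 hx
  have hxU (n : ℕ) : x ∈ U n := mem_iInter.1 (hU ▸ mem_singleton x) n
  choose C hCx hCc hCU using fun n => exists_mem_nhds_isClosed_subset ((hUo n).mem_nhds (hxU n))
  have hnhds : 𝓝 x = ⨅ n, 𝓟 (C n) := by
    refine le_antisymm (le_iInf fun n => le_principal_iff.2 (hCx n))
      (le_nhds_of_unique_clusterPt fun z hz => ?_)
    have hzC (n : ℕ) : z ∈ C n :=
      (hCc n).closure_subset (mem_closure_iff_clusterPt.2 (hz.mono (iInf_le _ n)))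
    have hzU : z ∈ ⋂ n, U n := mem_iInter.2 fun n => hCU n (hzC n)
    rwa [← hU] at hzU
  rw [hnhds]
  infer_instance

section Action

variable {G T : Type} [Group G] [MulAction G T] [TopologicalSpace T]

theorem isOpen_distinctTriples [T2Space T] : IsOpen (distinctTriples T) :=
  (isOpen_ne_fun continuous_fst (continuous_fst.comp continuous_snd)).inter
    ((isOpen_ne_fun continuous_fst (continuous_snd.comp continuous_snd)).inter
      (isOpen_ne_fun (continuous_fst.comp continuous_snd) (continuous_snd.comp continuous_snd)))

theorem continuous_tripleSmul {g : G} (hg : Continuous fun x : T => g • x) :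
    Continuous (tripleSmul g : T × T × T → T × T × T) := by
  unfold tripleSmul
  fun_prop

theorem ThreeCocompact.isGδ_singleton [Countable G] [T2Space T]
    (hcont : ∀ g : G, Continuous fun x : T => g • x) (h3c : ThreeCocompact G T)
    {u c : T} (hcu : c ≠ u) : IsGδ {u} := by
  obtain ⟨K, hKD, hK, hKfund⟩ := h3c
  have hu : {u} = {c}ᶜ ∩ ⋂ g : G, (fun v => tripleSmul g (u, v, c)) ⁻¹' Kᶜ := by
    ext v
    simp only [mem_singleton_iff, mem_inter_iff, mem_compl_iff, mem_iInter, mem_preimage]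
    constructor
    · rintro rfl
      exact ⟨hcu.symm, fun g hg => (hKD hg).1 rfl⟩
    · rintro ⟨hvc, hvK⟩
      by_contra hvu
      obtain ⟨g, hg⟩ := hKfund (u, v, c) ⟨Ne.symm hvu, hcu.symm, hvc⟩
      exact hvK g hg
  rw [hu]
  refine isOpen_compl_singleton.isGδ.inter (IsGδ.iInter fun g => IsOpen.isGδ ?_)
  exact hK.isClosed.isOpen_compl.preimage
    ((continuous_tripleSmul (hcont g)).comp (by fun_prop))

theorem exists_injective_comp_of_finite_fibers {α : Type*} (h : ℕ → α)
    (hfib : ∀ a, (h ⁻¹' {a}).Finite) : ∃ φ : ℕ → ℕ, Injective (h ∘ φ) := by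
  have hrange : (range h).Infinite := fun hfin =>
    infinite_univ (by simpa using hfin.preimage' fun a _ => hfib a)
  choose φ hφ using fun k => (hrange.natEmbedding _ k).2
  refine ⟨φ, fun m n hmn => (hrange.natEmbedding _).injective (Subtype.ext ?_)⟩
  simpa [hφ] using hmn

theorem ThreeDiscontinuous.not_tendsto_tripleSmul [T2Space T] (h3 : ThreeDiscontinuous G T)
    {g : ℕ → G} (hg : Injective g) {p : ℕ → T × T × T} {τ σ : T × T × T}
    (hτ : τ ∈ distinctTriples T) (hσ : σ ∈ distinctTriples T) (hp : Tendsto p atTop (𝓝 τ)) :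
    ¬ Tendsto (fun n => tripleSmul (g n) (p n)) atTop (𝓝 σ) := by
  intro hgp
  obtain ⟨N, hN⟩ := eventually_atTop.1
    ((hp.eventually_mem (isOpen_distinctTriples.mem_nhds hτ)).and
      (hgp.eventually_mem (isOpen_distinctTriples.mem_nhds hσ)))
  have hN' (n : ℕ) := hN (n + N) le_add_self
  let L₁ := insert τ (range fun n => p (n + N))
  let L₂ := insert σ (range fun n => tripleSmul (g (n + N)) (p (n + N)))
  have hfin := h3 L₁ L₂ (insert_subset_iff.2 ⟨hτ, range_subset_iff.2 fun n => (hN' n).1⟩)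
    (insert_subset_iff.2 ⟨hσ, range_subset_iff.2 fun n => (hN' n).2⟩)
    (hp.comp (tendsto_add_atTop_nat N)).isCompact_insert_range
    (hgp.comp (tendsto_add_atTop_nat N)).isCompact_insert_range
  refine infinite_range_of_injective (hg.comp (add_left_injective N)) (hfin.subset ?_)
  rintro _ ⟨n, rfl⟩
  exact ⟨_, mem_image_of_mem _ (mem_insert_of_mem _ ⟨n, rfl⟩), mem_insert_of_mem _ ⟨n, rfl⟩⟩

theorem ThreeCocompact.exists_injective_tendsto_tripleSmul [T2Space T] [FirstCountableTopology T]
    (hcont : ∀ g : G, Continuous fun x : T => g • x) (h3c : ThreeCocompact G T)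
    {x w : T} (hwx : w ≠ x) {y : ℕ → T} (hy : Tendsto y atTop (𝓝 x))
    (hyx : ∀ n, y n ≠ x) (hyw : ∀ n, y n ≠ w) :
    ∃ (g : ℕ → G) (u : ℕ → T) (σ : T × T × T), Injective g ∧ Tendsto u atTop (𝓝 x) ∧
      σ ∈ distinctTriples T ∧ Tendsto (fun k => tripleSmul (g k) (x, u k, w)) atTop (𝓝 σ) := by
  obtain ⟨K, hKD, hK, hKfund⟩ := h3c
  choose h hh using fun n => hKfund (x, y n, w) ⟨(hyx n).symm, hwx.symm, hyw n⟩
  have hfib (g : G) : (h ⁻¹' {g}).Finite := by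
    by_contra hinf
    have hfreq : ∃ᶠ n in atTop, tripleSmul g (x, y n, w) ∈ K :=
      (Nat.frequently_atTop_iff_infinite.2 hinf).mono fun n hn => hn ▸ hh n
    have hlim : Tendsto (fun n => tripleSmul g (x, y n, w)) atTop (𝓝 (tripleSmul g (x, x, w))) :=
      ((continuous_tripleSmul (hcont g)).tendsto _).comp
        (tendsto_const_nhds.prodMk_nhds (hy.prodMk_nhds tendsto_const_nhds))
    exact (hKD (hK.isClosed.mem_of_frequently_of_tendsto hfreq hlim)).1 rfl
  obtain ⟨φ, hφ⟩ := exists_injective_comp_of_finite_fibers h hfib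
  obtain ⟨σ, hσK, ψ, hψ, hconv⟩ := hK.tendsto_subseq fun k => hh (φ k)
  exact ⟨h ∘ φ ∘ ψ, y ∘ φ ∘ ψ, σ, hφ.comp hψ.injective,
    hy.comp (hφ.of_comp.nat_tendsto_atTop.comp hψ.tendsto_atTop), hKD hσK, hconv⟩

theorem ThreeDiscontinuous.isConical_of_tendsto_tripleSmul [CompactSpace T] [T2Space T]
    [FirstCountableTopology T] (h3 : ThreeDiscontinuous G T) {x w : T} (hwx : w ≠ x)
    {g : ℕ → G} (hg : Injective g) {u : ℕ → T} (hu : Tendsto u atTop (𝓝 x)) {b a₁ a₂ : T}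
    (hσ : (b, a₁, a₂) ∈ distinctTriples T)
    (hconv : Tendsto (fun k => tripleSmul (g k) (x, u k, w)) atTop (𝓝 (b, a₁, a₂))) :
    IsConical G x := by
  refine ⟨g, a₂, b, hg, hσ.2.1.symm, fun z hzx => ?_, hconv.fst_nhds⟩
  rcases eq_or_ne z w with rfl | hzw
  · exact hconv.snd_nhds.snd_nhds
  refine tendsto_nhds_of_unique_mapClusterPt fun c hc => ?_
  obtain ⟨ψ, hψ, hgz⟩ := hc.tendsto_subseq
  have hconvψ := hconv.comp hψ.tendsto_atTop
  by_contra hca₂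
  by_cases hcb : c = b
  · subst hcb
    exact h3.not_tendsto_tripleSmul (hg.comp hψ.injective) (τ := (z, x, w)) ⟨hzx, hzw, hwx.symm⟩ hσ
      (tendsto_const_nhds.prodMk_nhds
        ((hu.comp hψ.tendsto_atTop).prodMk_nhds tendsto_const_nhds))
      (hgz.prodMk_nhds hconvψ.snd_nhds)
  · exact h3.not_tendsto_tripleSmul (hg.comp hψ.injective) (p := fun _ => (x, z, w)) (σ := (b, c, a₂))
      ⟨hzx.symm, hwx.symm, hzw⟩ ⟨Ne.symm hcb, hσ.2.1, hca₂⟩ tendsto_const_nhds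
      (hconvψ.fst_nhds.prodMk_nhds (hgz.prodMk_nhds hconvψ.snd_nhds.snd_nhds))

end Action

/-- if a finitely generated group `G` acts 3-discontinuously and
3-cocompactly on a compactum `T` without isolated points, then every point of
`T` is a conical limit point (in particular there are no parabolic points). -/
theorem stmt14 {G T : Type} [Group G] [Group.FG G]
    [TopologicalSpace T] [CompactSpace T] [T2Space T] [MulAction G T]
    (hcont : ∀ g : G, Continuous (fun x : T => g • x))
    (h3 : ThreeDiscontinuous G T)
    (h3c : ThreeCocompact G T)
    (hni : ∀ x : T, ¬ IsOpen ({x} : Set T)) :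
    ∀ x : T, IsConical G x := by
  have := Group.FG.countable G
  have (x : T) : NeBot (𝓝[≠] x) := ⟨mt (isOpen_singleton_iff_punctured_nhds x).2 (hni x)⟩
  have hne (x : T) : ∃ w, w ≠ x := (dense_compl_singleton x).nonempty_iff.2 ⟨x⟩
  have : FirstCountableTopology T :=
    ⟨fun u => (h3c.isGδ_singleton hcont (hne u).choose_spec).isCountablyGenerated_nhds⟩
  intro x
  obtain ⟨w, hwx⟩ := hne x
  obtain ⟨y, hyS, hy⟩ := mem_closure_iff_seq_limit.1
    (((dense_compl_singleton x).sdiff_singleton w).closure_eq ▸ mem_univ x)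
  obtain ⟨g, u, ⟨b, a₁, a₂⟩, hg, hu, hσ, hconv⟩ := h3c.exists_injective_tendsto_tripleSmul hcont
    hwx hy (fun n => (hyS n).1) (fun n => (hyS n).2)
  exact h3.isConical_of_tendsto_tripleSmul hwx hg hu hσ hconv
end
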